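/- arXiv:1706.06441 — 7 statements merged into one kernel-verified Lean document; each statement's English description precedes it below -/
import Mathlib

section
/- For all positive integers k and r there exists a k-strong bipartite tournament B with minimum out-degree exactly k which admits no r-out-colouring. -/
/-- An `r`-out-colouring of the digraph with arc relation `A`: a colouring of the
vertices with `r` colours such that no out-neighbourhood is monochromatic. -/
def HasOutColouring {V : Type*} (A : V → V → Prop) (r : ℕ) : Prop :=
  ∃ γ : V → Fin r, ∀ v : V, ∃ u w : V, A v u ∧ A v w ∧ γ u ≠ γ w

/-- A bipartite tournament: an orientation of a complete bipartite graph. -/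
def IsBipartiteTournament {V : Type*} (A : V → V → Prop) : Prop :=
  ∃ X : Set V, ∀ u v : V,
    ((u ∈ X ↔ v ∈ X) → ¬ A u v) ∧ ((u ∈ X ↔ v ∉ X) → Xor' (A u v) (A v u))

/-- A digraph is `k`-strong if after deleting any set of fewer than `k` vertices,
the remaining digraph is strongly connected. -/
def IsKStrong {V : Type*} (A : V → V → Prop) (k : ℕ) : Prop :=
  ∀ S : Set V, S.ncard < k → ∀ u v : V, u ∉ S → v ∉ S →
    Relation.ReflTransGen (fun a b => a ∉ S ∧ b ∉ S ∧ A a b) u v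

/-!
Let `Y` be a finite set and let the other side consist of all `k`-subsets `T` of `Y`, with
`T → y` if `y ∈ T` and `y → T` otherwise. Each `T` has out-degree exactly `k`. If
`|Y| > r (k - 1)`, any `r`-colouring of `Y` has a monochromatic `k`-set `T` by pigeonhole, and then
the out-neighbourhood of `T` is monochromatic. If `|Y| ≥ k + 2`, then for `y ≠ y'` at least `k`
sets `T` satisfy `y ∉ T ∋ y'`, so a set `S` of fewer than `k` vertices misses one of the paths
`y → T → y'`; if moreover `|Y| ≥ 2k`, every `T` keeps an in- and an out-neighbour outside `S`.
Hence the digraph is `k`-strong.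
-/

open Finset Function

section Comap

variable {V W : Type*} {A : V → V → Prop}

lemma IsBipartiteTournament.comap (f : W → V) (h : IsBipartiteTournament A) :
    IsBipartiteTournament fun a b => A (f a) (f b) := by
  obtain ⟨X, hX⟩ := h
  exact ⟨f ⁻¹' X, fun u v => hX (f u) (f v)⟩

lemma IsKStrong.comap_equiv {k : ℕ} (e : W ≃ V) (h : IsKStrong A k) :
    IsKStrong (fun a b => A (e a) (e b)) k := by
  intro S hS u v hu hv
  have hS' : (e '' S).ncard < k := by rwa [Set.ncard_image_of_injective _ e.injective]
  have path := h (e '' S) hS' (e u) (e v) (by simpa) (by simpa)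
  simpa [onFun] using path.lift (p := fun a b => a ∉ S ∧ b ∉ S ∧ A (e a) (e b)) e.symm
    fun a b hab => by simpa [onFun] using hab

lemma ncard_setOf_comp_equiv (e : W ≃ V) (p : V → Prop) :
    {w | p (e w)}.ncard = {v | p v}.ncard :=
  Set.ncard_preimage_of_injective_subset_range e.injective
    (by rw [e.range_eq_univ]; exact Set.subset_univ _)

lemma HasOutColouring.of_comap_equiv {r : ℕ} (e : W ≃ V)
    (h : HasOutColouring (fun a b => A (e a) (e b)) r) : HasOutColouring A r := by
  obtain ⟨γ, hγ⟩ := h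
  refine ⟨γ ∘ e.symm, fun v => ?_⟩
  obtain ⟨u, w, hu, hw, hne⟩ := hγ (e.symm v)
  exact ⟨e u, e w, by simpa using hu, by simpa using hw, by simpa using hne⟩

end Comap

lemma le_ncard_setOf_notMem_mem {α : Type*} [Fintype α] {k : ℕ} {y y' : α} (hne : y ≠ y')
    (h : k + 2 ≤ Fintype.card α) :
    k ≤ {T : {T : Finset α // T.card = k} | y ∉ T.1 ∧ y' ∈ T.1}.ncard := by
  classical
  obtain ⟨W, hW, hWcard⟩ := exists_subset_card_eq (s := univ \ {y, y'}) (n := k) (by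
    rw [card_sdiff_of_subset (subset_univ _), card_univ]
    have := card_le_two (a := y) (b := y')
    omega)
  have hyW : y ∉ W := fun h => by simpa using hW h
  have hy'W : y' ∉ W := fun h => by simpa using hW h
  let f : W → {T : Finset α // T.card = k} := fun w =>
    ⟨insert y' (W.erase w), by
      have := card_pos.2 ⟨_, w.2⟩
      rw [card_insert_of_notMem (fun h => hy'W (mem_of_mem_erase h)), card_erase_of_mem w.2]
      omega⟩
  have hf : Injective f := by
    rintro ⟨a, ha⟩ ⟨b, hb⟩ hab
    have h : a ∉ (f ⟨a, ha⟩).1 := by simp [f, show a ≠ y' by rintro rfl; exact hy'W ha]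
    rw [hab] at h
    simp only [f, mem_insert, mem_erase, ha, and_true, not_or, not_not] at h
    exact Subtype.ext h.2
  calc k = (Set.range f).ncard := by
        rw [Set.ncard_range_of_injective hf, Nat.card_eq_fintype_card, Fintype.card_coe, hWcard]
    _ ≤ _ := Set.ncard_le_ncard (by
        rintro _ ⟨w, rfl⟩
        simp [f, hne, hyW])

def subsetArc (α : Type*) (k : ℕ) :
    {T : Finset α // T.card = k} ⊕ α → {T : Finset α // T.card = k} ⊕ α → Prop
  | .inl T, .inr y => y ∈ T.1
  | .inr y, .inl T => y ∉ T.1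
  | _, _ => False

namespace subsetArc

variable {α : Type*} {k : ℕ}

lemma isBipartiteTournament : IsBipartiteTournament (subsetArc α k) := by
  refine ⟨Set.range .inl, ?_⟩
  rintro (T | y) (T' | y') <;> simp [subsetArc]
  exacts [xor_not_right.2 Iff.rfl, xor_not_left.2 Iff.rfl]

lemma setOf_inl (T : {T : Finset α // T.card = k}) :
    {w | subsetArc α k (.inl T) w} = .inr '' T.1 := by
  ext (_ | y) <;> simp [subsetArc]

lemma ncard_setOf_inl (T : {T : Finset α // T.card = k}) :
    {w | subsetArc α k (.inl T) w}.ncard = k := by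
  rw [setOf_inl, Set.ncard_image_of_injective _ Sum.inr_injective, Set.ncard_coe_finset, T.2]

variable [Fintype α]

lemma le_ncard_setOf (h : k + 2 ≤ Fintype.card α) :
    ∀ v, k ≤ {w | subsetArc α k v w}.ncard
  | .inl T => (ncard_setOf_inl T).ge
  | .inr y => by
    have : Nontrivial α := Fintype.one_lt_card_iff_nontrivial.1 (by omega)
    obtain ⟨y', hy'⟩ := exists_ne y
    calc k ≤ {T : {T : Finset α // T.card = k} | y ∉ T.1 ∧ y' ∈ T.1}.ncard :=
          le_ncard_setOf_notMem_mem hy'.symm h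
      _ = (.inl '' {T : {T : Finset α // T.card = k} | y ∉ T.1 ∧ y' ∈ T.1}).ncard :=
          (Set.ncard_image_of_injective _ Sum.inl_injective).symm
      _ ≤ _ := Set.ncard_le_ncard (by rintro _ ⟨T, hT, rfl⟩; exact hT.1)

lemma isKStrong (h₁ : k + 2 ≤ Fintype.card α) (h₂ : 2 * k ≤ Fintype.card α) :
    IsKStrong (subsetArc α k) k := by
  classical
  intro S hS u v hu hv
  set R := fun a b => a ∉ S ∧ b ∉ S ∧ subsetArc α k a b
  have avoid (t : Set ({T : Finset α // T.card = k} ⊕ α)) (ht : k ≤ t.ncard) :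
      ∃ x ∈ t, x ∉ S :=
    Set.exists_mem_notMem_of_ncard_lt_ncard (hS.trans_le ht)
  have across (y y' : α) (hy : .inr y ∉ S) (hy' : .inr y' ∉ S) :
      Relation.ReflTransGen R (.inr y) (.inr y') := by
    rcases eq_or_ne y y' with rfl | hne
    · rfl
    obtain ⟨_, ⟨T, hT, rfl⟩, hTS⟩ := avoid (.inl '' {T | y ∉ T.1 ∧ y' ∈ T.1}) (by
      rw [Set.ncard_image_of_injective _ Sum.inl_injective]
      exact le_ncard_setOf_notMem_mem hne h₁)
    exact .head ⟨hy, hTS, hT.1⟩ (.single ⟨hTS, hy', hT.2⟩)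
  have exit : ∃ y, .inr y ∉ S ∧ Relation.ReflTransGen R u (.inr y) := by
    cases u with
    | inr y => exact ⟨y, hu, .refl⟩
    | inl T =>
      obtain ⟨_, ⟨y, hy, rfl⟩, hyS⟩ := avoid (.inr '' T.1) (by
        rw [Set.ncard_image_of_injective _ Sum.inr_injective, Set.ncard_coe_finset, T.2])
      exact ⟨y, hyS, .single ⟨hu, hyS, hy⟩⟩
  have entry : ∃ y, .inr y ∉ S ∧ Relation.ReflTransGen R (.inr y) v := by
    cases v with
    | inr y => exact ⟨y, hv, .refl⟩
    | inl T =>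
      obtain ⟨_, ⟨y, hy, rfl⟩, hyS⟩ := avoid (.inr '' ↑T.1ᶜ) (by
        rw [Set.ncard_image_of_injective _ Sum.inr_injective, Set.ncard_coe_finset, card_compl,
          T.2]
        omega)
      exact ⟨y, hyS, .single ⟨hyS, hv, by simpa [subsetArc] using hy⟩⟩
  obtain ⟨y, hyS, hy⟩ := exit
  obtain ⟨y', hy'S, hy'⟩ := entry
  exact hy.trans ((across y y' hyS hy'S).trans hy')

lemma not_hasOutColouring {r : ℕ} (h : r * (k - 1) < Fintype.card α) :
    ¬ HasOutColouring (subsetArc α k) r := by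
  classical
  rintro ⟨γ, hγ⟩
  obtain ⟨c, hc⟩ := Fintype.exists_lt_card_fiber_of_mul_lt_card (fun y => γ (.inr y))
    (by rwa [Fintype.card_fin])
  obtain ⟨T, hTc, hT⟩ := exists_subset_card_eq (show k ≤ #{y | γ (.inr y) = c} by omega)
  have mono : ∀ x, subsetArc α k (.inl ⟨T, hT⟩) x → γ x = c := by
    rintro (_ | y) hx
    · exact hx.elim
    · exact (mem_filter.1 (hTc hx)).2
  obtain ⟨u, w, hu, hw, hne⟩ := hγ (.inl ⟨T, hT⟩)
  exact hne ((mono u hu).trans (mono w hw).symm)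

end subsetArc

theorem stmt0_general (k r : ℕ) :
    ∃ (n : ℕ) (A : Fin n → Fin n → Prop),
      IsBipartiteTournament A ∧ IsKStrong A k ∧
      (∀ v, k ≤ {w | A v w}.ncard) ∧ (∃ v, {w | A v w}.ncard = k) ∧
      ¬ HasOutColouring A r := by
  let α := Fin (r * k + 2 * k + 2)
  have hα : Fintype.card α = r * k + 2 * k + 2 := Fintype.card_fin _
  have hrk : r * (k - 1) ≤ r * k := Nat.mul_le_mul_left r (Nat.sub_le k 1)
  obtain ⟨T, -, hT⟩ := exists_subset_card_eq (s := (univ : Finset α)) (n := k) (by simp; omega)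
  let e := (Fintype.equivFin ({T : Finset α // T.card = k} ⊕ α)).symm
  refine ⟨_, fun i j => subsetArc α k (e i) (e j), subsetArc.isBipartiteTournament.comap e,
    (subsetArc.isKStrong (by omega) (by omega)).comap_equiv e,
    fun i => (subsetArc.le_ncard_setOf (by omega) (e i)).trans_eq
      (ncard_setOf_comp_equiv e _).symm,
    ⟨e.symm (.inl ⟨T, hT⟩), ?_⟩,
    fun h => subsetArc.not_hasOutColouring (by omega) (h.of_comap_equiv e)⟩
  simpa [ncard_setOf_comp_equiv e] using subsetArc.ncard_setOf_inl ⟨T, hT⟩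

/-- For all positive integers `k` and `r` there exists a `k`-strong bipartite tournament
with minimum out-degree exactly `k` which admits no `r`-out-colouring. -/
theorem stmt0 (k r : ℕ) (hk : 0 < k) (hr : 0 < r) :
    ∃ (n : ℕ) (A : Fin n → Fin n → Prop),
      IsBipartiteTournament A ∧ IsKStrong A k ∧
      (∀ v, k ≤ {w | A v w}.ncard) ∧ (∃ v, {w | A v w}.ncard = k) ∧
      ¬ HasOutColouring A r :=
  stmt0_general k r
end

section
/- Every tournament on n ≥ 5 vertices contains either an in-dominating vertex or an in-dominating directed cycle of length at most n−2. -/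
/-!
Let `S` be the set of vertices reachable from every vertex, the terminal strong component.
Every vertex outside `S` has an arc into `S`, so if `|S| = 1` its vertex is in-dominating.
Otherwise `S` spans a strong tournament on `s ≥ 3` vertices, and an in-dominating cycle of
length at most `max 3 (s - 2)` inside it is in-dominating in the whole tournament. For `s ≤ 4`
any 3-cycle will do. For `s ≥ 5` use Moon's theorem that every vertex of a strong tournament
lies on cycles of all lengths `3, …, s`: if an `(s - 2)`-cycle `C` is not in-dominating, some
vertex `a` outside it dominates `C`, so `a` has at most one out-neighbour `b`. The
`(s - 2)`-cycle through `a` then also contains `b`, and every vertex outside it has an arc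
to `a`.
-/

/-- A tournament: between any two distinct vertices there is exactly one arc,
and there are no loops. -/
def IsTournament {V : Type*} (A : V → V → Prop) : Prop :=
  (∀ v : V, ¬ A v v) ∧ ∀ u v : V, u ≠ v → Xor' (A u v) (A v u)

open Function Set Relation

section

variable {V : Type*} {A : V → V → Prop}

namespace IsTournament

theorem ne_of_adj (hT : IsTournament A) {u v : V} (h : A u v) : u ≠ v := by
  rintro rfl
  exact hT.1 u h

theorem not_adj_of_adj (hT : IsTournament A) {u v : V} (h : A u v) : ¬ A v u := by
  rcases hT.2 u v (hT.ne_of_adj h) with ⟨-, h'⟩ | ⟨-, h'⟩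
  exacts [h', absurd h h']

theorem adj_of_not_adj (hT : IsTournament A) {u v : V} (hne : u ≠ v) (h : ¬ A u v) : A v u := by
  rcases hT.2 u v hne with ⟨h', -⟩ | ⟨h', -⟩
  exacts [absurd h' h, h']

theorem comp {W : Type*} (hT : IsTournament A) {f : W → V} (hf : Injective f) :
    IsTournament fun a b => A (f a) (f b) :=
  ⟨fun v => hT.1 (f v), fun _ _ h => hT.2 _ _ (hf.ne h)⟩

end IsTournament

def IsStrong (A : V → V → Prop) : Prop :=
  ∀ u v, ReflTransGen A u v

theorem IsStrong.exists_adj_out (hS : IsStrong A) (P : Set V) {u w : V} (hu : u ∈ P)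
    (hw : w ∉ P) : ∃ p ∈ P, ∃ q ∉ P, A p q := by
  induction hS u w with
  | refl => exact absurd hu hw
  | @tail b c _ hbc ih =>
    by_cases hb : b ∈ P
    · exact ⟨b, hb, c, hw, hbc⟩
    · exact ih hb

def IsDiCycle (A : V → V → Prop) {m : ℕ} (φ : ZMod m → V) : Prop :=
  Injective φ ∧ ∀ i, A (φ i) (φ (i + 1))

theorem IsDiCycle.comp {W : Type*} {m : ℕ} {ψ : ZMod m → W} {f : W → V}
    (hψ : IsDiCycle (fun a b => A (f a) (f b)) ψ) (hf : Injective f) : IsDiCycle A (f ∘ ψ) :=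
  ⟨hf.comp hψ.1, hψ.2⟩

theorem add_card_le_card_of_injective [Fintype V] {m : ℕ} [NeZero m] {φ : ZMod m → V}
    (hφ : Injective φ) (s : Finset V) (hs : ∀ v ∈ s, v ∉ range φ) :
    m + s.card ≤ Fintype.card V := by
  have hinj : Injective (Sum.elim φ ((↑) : s → V)) :=
    hφ.sumElim Subtype.val_injective fun i v h => hs v v.2 ⟨i, h⟩
  simpa using Fintype.card_le_of_injective _ hinj

theorem exists_isDiCycle_of_isChain {a : V} {l : List V} {k : ℕ} (hk : l.length = k)
    (hnd : l.Nodup) (ha : l.head? = some a) (hch : (l ++ [a]).IsChain A) :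
    ∃ φ : ZMod k → V, IsDiCycle A φ ∧ ∀ u, u ∈ range φ ↔ u ∈ l := by
  obtain ⟨l, rfl⟩ : ∃ t, l = a :: t := by
    cases l with
    | nil => simp at ha
    | cons b t => exact ⟨t, by simpa using ha⟩
  rw [List.length_cons] at hk
  subst hk
  have hwrap : ∀ j (hj : j ≤ l.length + 1),
      (a :: l ++ [a])[j]'(by simpa using hj) =
        (a :: l)[j % (l.length + 1)]'(Nat.mod_lt _ (by omega)) := by
    intro j hj
    rcases Nat.lt_or_ge j (l.length + 1) with h | h
    · rw [List.getElem_append_left (by simpa using h)]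
      simp only [Nat.mod_eq_of_lt h]
    · obtain rfl : j = l.length + 1 := le_antisymm hj h
      simp
  refine ⟨fun i => (a :: l)[i.val]'(ZMod.val_lt i), ⟨?_, fun i => ?_⟩, fun u => ?_⟩
  · intro i j hij
    exact ZMod.val_injective _ (hnd.getElem_inj_iff.1 hij)
  · have hi := ZMod.val_lt i
    have hval : (i + 1).val = (i.val + 1) % (l.length + 1) := by
      rw [ZMod.val_add, ZMod.val_one_eq_one_mod, Nat.add_mod_mod]
    have := hch.getElem i.val (by simpa using hi)
    rw [hwrap _ hi.le, hwrap _ hi] at this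
    simp only [Nat.mod_eq_of_lt hi] at this
    simpa only [hval] using this
  · constructor
    · rintro ⟨i, rfl⟩
      exact List.getElem_mem _
    · intro hu
      obtain ⟨j, hj, rfl⟩ := List.getElem_of_mem hu
      exact ⟨j, by simp [ZMod.val_cast_of_lt hj]⟩

def arcPath {m : ℕ} (φ : ZMod m → V) (s : ZMod m) (r : ℕ) : List V :=
  (List.range r).map fun j : ℕ => φ (s + j)

section arcPath

variable {m : ℕ} {φ : ZMod m → V} (s : ZMod m)

theorem mem_arcPath {r j : ℕ} (hj : j < r) : φ (s + j) ∈ arcPath φ s r :=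
  List.mem_map.2 ⟨j, List.mem_range.2 hj, rfl⟩

theorem apply_mem_arcPath [NeZero m] (j : ZMod m) : φ j ∈ arcPath φ s m := by
  simpa using mem_arcPath (φ := φ) s (ZMod.val_lt (j - s))

theorem mem_range_of_mem_arcPath {r : ℕ} {u : V} (hu : u ∈ arcPath φ s r) :
    u ∈ range φ := by
  obtain ⟨j, -, rfl⟩ := List.mem_map.1 hu
  exact ⟨_, rfl⟩

theorem head?_arcPath (r : ℕ) : (arcPath φ s (r + 1)).head? = some (φ s) := by
  simp [arcPath, List.range_succ_eq_map]

theorem getLast?_arcPath (r : ℕ) : (arcPath φ s (r + 1)).getLast? = some (φ (s + r)) := by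
  simp [arcPath, List.range_succ]

theorem IsDiCycle.isChain_arcPath (hφ : IsDiCycle A φ) (r : ℕ) :
    (arcPath φ s r).IsChain A := by
  rw [arcPath, List.isChain_map, List.isChain_range]
  intro j _
  simpa [add_assoc] using hφ.2 (s + j)

theorem IsDiCycle.nodup_arcPath (hφ : IsDiCycle A φ) {r : ℕ} (hr : r ≤ m) :
    (arcPath φ s r).Nodup := by
  refine (List.nodup_range).map_on fun j hj k hk h => ?_
  have := congrArg ZMod.val (add_left_cancel (hφ.1 h))
  rw [List.mem_range] at hj hk
  rwa [ZMod.val_cast_of_lt (by omega), ZMod.val_cast_of_lt (by omega)] at this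

end arcPath

namespace IsDiCycle

theorem exists_insert {n : ℕ} {φ : ZMod (n + 1) → V} (hφ : IsDiCycle A φ) {v : V}
    (hv : v ∉ range φ) {i : ZMod (n + 1)} (hiv : A (φ i) v) (hvi : A v (φ (i + 1))) :
    ∃ ψ : ZMod (n + 2) → V, IsDiCycle A ψ ∧ range φ ⊆ range ψ := by
  have hlast : (arcPath φ (i + 1) (n + 1)).getLast? = some (φ i) := by
    have h : ((n + 1 : ℕ) : ZMod (n + 1)) = 0 := ZMod.natCast_self _
    push_cast at h
    rw [getLast?_arcPath, add_assoc, add_comm 1, h, add_zero]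
  obtain ⟨ψ, hψ, hmem⟩ := exists_isDiCycle_of_isChain (k := n + 2)
    (l := arcPath φ (i + 1) (n + 1) ++ [v]) (a := φ (i + 1)) (by simp [arcPath])
    (List.nodup_append.2 ⟨hφ.nodup_arcPath _ le_rfl, List.nodup_singleton v, by
      rintro u hu _ h rfl
      exact hv (List.mem_singleton.1 h ▸ mem_range_of_mem_arcPath _ hu)⟩)
    (by rw [List.head?_append, head?_arcPath]; rfl)
    (by
      rw [List.append_assoc, List.isChain_append]
      refine ⟨hφ.isChain_arcPath _ _, List.isChain_pair.2 hvi, ?_⟩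
      simp [hlast, hiv])
  refine ⟨ψ, hψ, ?_⟩
  rintro _ ⟨j, rfl⟩
  refine (hmem _).2 (List.mem_append_left _ ?_)
  exact apply_mem_arcPath _ j

theorem exists_replace {n : ℕ} {φ : ZMod (n + 2) → V} (hφ : IsDiCycle A φ) {y z : V}
    (hy : y ∉ range φ) (hz : z ∉ range φ) (hne : y ≠ z) (hyz : A y z)
    (hφy : ∀ i, A (φ i) y) (hzφ : ∀ i, A z (φ i)) (j : ZMod (n + 2)) :
    ∃ ψ : ZMod (n + 3) → V, IsDiCycle A ψ ∧ φ j ∈ range ψ := by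
  have hlast : (arcPath φ (j + 2) (n + 1)).getLast? = some (φ j) := by
    have h : ((n + 2 : ℕ) : ZMod (n + 2)) = 0 := ZMod.natCast_self _
    push_cast at h
    rw [getLast?_arcPath, add_assoc, add_comm 2, h, add_zero]
  obtain ⟨ψ, hψ, hmem⟩ := exists_isDiCycle_of_isChain (k := n + 3)
    (l := arcPath φ (j + 2) (n + 1) ++ [y, z]) (a := φ (j + 2)) (by simp [arcPath])
    (List.nodup_append.2 ⟨hφ.nodup_arcPath _ (by omega), by simpa using hne, by
      rintro u hu _ h rfl
      have := mem_range_of_mem_arcPath _ hu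
      rcases List.mem_pair.1 h with rfl | rfl
      exacts [hy this, hz this]⟩)
    (by rw [List.head?_append, head?_arcPath]; rfl)
    (by
      rw [List.append_assoc, List.isChain_append]
      refine ⟨hφ.isChain_arcPath _ _, ?_, ?_⟩
      · simp [hyz, hzφ]
      · simp [hlast, hφy])
  exact ⟨ψ, hψ, (hmem _).2 (List.mem_append_left _ (List.mem_of_getLast? hlast))⟩

end IsDiCycle

-- Following the cycle, an arc `φ i → v` forces `φ (i + 1) → v`.
theorem IsTournament.forall_adj_or_forall_adj (hT : IsTournament A) {m : ℕ} [NeZero m]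
    (φ : ZMod m → V) {v : V} (hv : v ∉ range φ)
    (hins : ∀ i, A (φ i) v → ¬ A v (φ (i + 1))) :
    (∀ i, A v (φ i)) ∨ ∀ i, A (φ i) v := by
  have hne : ∀ i, φ i ≠ v := fun i h => hv ⟨i, h⟩
  by_cases h : ∃ k, A (φ k) v
  · right
    obtain ⟨k, hk⟩ := h
    intro i
    obtain ⟨r, rfl⟩ : ∃ r : ℕ, i = k + r := ⟨(i - k).val, by simp⟩
    induction r with
    | zero => simpa using hk
    | succ r ih =>
      simpa [add_assoc] using hT.adj_of_not_adj (hne _).symm (hins _ ih)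
  · push Not at h
    exact .inl fun i => hT.adj_of_not_adj (hne i) (h i)

namespace IsStrong

theorem exists_dominated_adj_dominating (hS : IsStrong A) (hT : IsTournament A) {m : ℕ} [NeZero m]
    {φ : ZMod m → V} {v : V} (hv : v ∉ range φ)
    (hins : ∀ u ∉ range φ, ∀ i, A (φ i) u → ¬ A u (φ (i + 1))) :
    ∃ y ∉ range φ, ∃ z ∉ range φ,
      A y z ∧ (∀ i, A (φ i) y) ∧ ∀ i, A z (φ i) := by
  have hdich u hu := hT.forall_adj_or_forall_adj φ hu (hins u hu)
  obtain ⟨y₀, hy₀⟩ : {u | u ∉ range φ ∧ ∀ i, A (φ i) u}.Nonempty := by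
    obtain ⟨_, ⟨i, rfl⟩, q, hq, hiq⟩ := hS.exists_adj_out (range φ) (mem_range_self 0) hv
    exact ⟨q, hq, (hdich q hq).resolve_left fun h => hT.not_adj_of_adj hiq (h i)⟩
  obtain ⟨y, hy, z, hz, hyz⟩ := hS.exists_adj_out {u | u ∉ range φ ∧ ∀ i, A (φ i) u}
    (w := φ 0) hy₀ fun h => h.1 (mem_range_self 0)
  have hzφ : z ∉ range φ := by
    rintro ⟨i, rfl⟩
    exact hT.not_adj_of_adj hyz (hy.2 i)
  exact ⟨y, hy.1, z, hzφ, hyz, hy.2, (hdich z hzφ).resolve_right fun h => hz ⟨hzφ, h⟩⟩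

-- Insert an outside vertex between two consecutive ones or, if none fits, trade `φ (j + 1)`
-- for an arc `y → z` from a vertex dominated by the cycle to one dominating it.
theorem exists_isDiCycle_succ (hS : IsStrong A) (hT : IsTournament A) {n : ℕ}
    {φ : ZMod (n + 2) → V} (hφ : IsDiCycle A φ) {v : V} (hv : v ∉ range φ)
    (j : ZMod (n + 2)) :
    ∃ ψ : ZMod (n + 3) → V, IsDiCycle A ψ ∧ φ j ∈ range ψ := by
  by_cases hins : ∃ u ∉ range φ, ∃ i, A (φ i) u ∧ A u (φ (i + 1))
  · obtain ⟨u, hu, i, hiu, hui⟩ := hins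
    obtain ⟨ψ, hψ, hsub⟩ := hφ.exists_insert hu hiu hui
    exact ⟨ψ, hψ, hsub ⟨j, rfl⟩⟩
  · push Not at hins
    obtain ⟨y, hy, z, hz, hyz, hφy, hzφ⟩ := hS.exists_dominated_adj_dominating hT hv hins
    exact hφ.exists_replace hy hz (hT.ne_of_adj hyz) hyz hφy hzφ j

theorem exists_isDiCycle_three (hS : IsStrong A) (hT : IsTournament A) [Nontrivial V] (x : V) :
    ∃ φ : ZMod 3 → V, IsDiCycle A φ ∧ x ∈ range φ := by
  obtain ⟨w, hw⟩ := exists_ne x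
  obtain ⟨y, hy, x', hx', hyx⟩ := hS.exists_adj_out {x}ᶜ (w := x) hw (by simp)
  rw [show x' = x by simpa using hx'] at hyx
  obtain ⟨p, hp, q, hq, hpq⟩ := hS.exists_adj_out {u | u = x ∨ A x u} (Or.inl rfl)
    (w := y) fun h => h.elim hy (hT.not_adj_of_adj hyx)
  simp only [mem_ofPred_eq, not_or] at hp hq
  have hxp : A x p := hp.resolve_left fun h => hq.2 (h ▸ hpq)
  have hqx : A q x := hT.adj_of_not_adj (Ne.symm hq.1) hq.2
  obtain ⟨φ, hφ, hmem⟩ := exists_isDiCycle_of_isChain (A := A) (l := [x, p, q]) (a := x) rfl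
    (by simp [hT.ne_of_adj hxp, hT.ne_of_adj hpq, (hT.ne_of_adj hqx).symm]) rfl
    (by simp [hxp, hpq, hqx])
  exact ⟨φ, hφ, (hmem x).2 (by simp)⟩

-- Moon's theorem: strong tournaments are vertex-pancyclic.
theorem exists_isDiCycle_mem [Fintype V] (hS : IsStrong A) (hT : IsTournament A) {k : ℕ}
    (hk3 : 3 ≤ k) (hk : k ≤ Fintype.card V) (x : V) :
    ∃ φ : ZMod k → V, IsDiCycle A φ ∧ x ∈ range φ := by
  induction k, hk3 using Nat.le_induction with
  | base =>
    have : Nontrivial V := Fintype.one_lt_card_iff_nontrivial.1 (by omega)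
    exact hS.exists_isDiCycle_three hT x
  | succ k hk3 ih =>
    obtain ⟨n, rfl⟩ : ∃ n, k = n + 2 := ⟨k - 2, by omega⟩
    obtain ⟨φ, hφ, j, rfl⟩ := ih (by omega)
    obtain ⟨v, hv⟩ : ∃ v, v ∉ range φ := by
      by_contra! h
      have := Fintype.card_le_of_surjective φ h
      simp only [ZMod.card] at this
      omega
    exact hS.exists_isDiCycle_succ hT hφ hv j

end IsStrong

def IsInDominating (A : V → V → Prop) (X : Set V) : Prop :=
  ∀ u ∉ X, ∃ w ∈ X, A u w

namespace IsStrong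

theorem isInDominating_range_of_card_le_four [Fintype V] (hS : IsStrong A) (hT : IsTournament A)
    {φ : ZMod 3 → V} (hφ : Injective φ) (hn : Fintype.card V ≤ 4) :
    IsInDominating A (range φ) := by
  classical
  intro u hu
  obtain ⟨p, hp, q, -, hpq⟩ := hS.exists_adj_out {u} rfl (w := φ 0) fun h => hu ⟨0, h⟩
  rw [mem_singleton_iff.1 hp] at hpq
  by_cases hqφ : q ∈ range φ
  · exact ⟨q, hqφ, hpq⟩
  have := add_card_le_card_of_injective hφ {u, q} (by
    simp only [Finset.mem_insert, Finset.mem_singleton]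
    rintro v (rfl | rfl)
    exacts [hu, hqφ])
  rw [Finset.card_pair (hT.ne_of_adj hpq)] at this
  omega

theorem exists_isInDominating_isDiCycle_of_five_le [Fintype V] (hS : IsStrong A)
    (hT : IsTournament A) (hn : 5 ≤ Fintype.card V) :
    ∃ φ : ZMod (Fintype.card V - 2) → V, IsDiCycle A φ ∧ IsInDominating A (range φ) := by
  classical
  have : NeZero (Fintype.card V - 2) := ⟨by omega⟩
  have : Nonempty V := Fintype.card_pos_iff.1 (by omega)
  obtain ⟨φ, hφ, -⟩ := hS.exists_isDiCycle_mem hT (k := Fintype.card V - 2) (by omega)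
    (by omega) (Classical.arbitrary V)
  by_cases hdom : IsInDominating A (range φ)
  · exact ⟨φ, hφ, hdom⟩
  obtain ⟨a, ha, haφ⟩ : ∃ a ∉ range φ, ∀ w ∈ range φ, ¬ A a w := by
    simpa [IsInDominating] using hdom
  -- only one vertex lies outside `range φ ∪ {a}`
  have hout : ∀ w w', A a w → A a w' → w = w' := by
    intro w w' hw hw'
    by_contra hne
    have := add_card_le_card_of_injective hφ.1 {a, w, w'} (by
      simp only [Finset.mem_insert, Finset.mem_singleton]
      rintro v (rfl | rfl | rfl)
      exacts [ha, fun h => haφ _ h hw, fun h => haφ _ h hw'])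
    rw [Finset.card_eq_three.2 ⟨a, w, w', hT.ne_of_adj hw, hT.ne_of_adj hw', hne, rfl⟩] at this
    omega
  obtain ⟨ψ, hψ, i, rfl⟩ := hS.exists_isDiCycle_mem hT (k := Fintype.card V - 2) (by omega)
    (by omega) a
  refine ⟨ψ, hψ, fun u hu => ?_⟩
  by_contra! h
  have hψu := hT.adj_of_not_adj (fun h => hu ⟨i, h.symm⟩) (h _ ⟨i, rfl⟩)
  exact hu ⟨i + 1, hout _ _ (hψ.2 i) hψu⟩

theorem exists_isInDominating_isDiCycle [Fintype V] (hS : IsStrong A) (hT : IsTournament A)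
    (hn : 2 ≤ Fintype.card V) :
    ∃ m, 3 ≤ m ∧ m ≤ max 3 (Fintype.card V - 2) ∧
      ∃ φ : ZMod m → V, IsDiCycle A φ ∧ IsInDominating A (range φ) := by
  rcases le_or_gt (Fintype.card V) 4 with h4 | h5
  · have : Nontrivial V := Fintype.one_lt_card_iff_nontrivial.1 (by omega)
    obtain ⟨φ, hφ, -⟩ := hS.exists_isDiCycle_three hT (Classical.arbitrary V)
    exact ⟨3, le_rfl, le_max_left _ _, φ, hφ,
      hS.isInDominating_range_of_card_le_four hT hφ.1 h4⟩
  · obtain ⟨φ, hφ, hdom⟩ := hS.exists_isInDominating_isDiCycle_of_five_le hT h5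
    exact ⟨_, by omega, le_max_right _ _, φ, hφ, hdom⟩

end IsStrong

-- In a tournament, the terminal strong component.
def terminalSet (A : V → V → Prop) : Set V :=
  {v | ∀ u, ReflTransGen A u v}

theorem isStrong_terminalSet : IsStrong fun a b : terminalSet A => A a b := by
  intro a b
  have hlift : ∀ {c}, ReflTransGen A a c → ∀ hc : c ∈ terminalSet A,
      ReflTransGen (fun x y : terminalSet A => A x y) a ⟨c, hc⟩ := by
    intro c h
    induction h with
    | refl => exact fun _ => .refl
    | tail hac hcd ih => exact fun _ => (ih fun u => (a.2 u).trans hac).tail hcd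
  exact hlift (b.2 a) b.2

namespace IsTournament

theorem adj_of_not_mem_terminalSet (hT : IsTournament A) {u w : V} (hu : u ∉ terminalSet A)
    (hw : w ∈ terminalSet A) : A u w := by
  by_contra h
  have hwu := hT.adj_of_not_adj (by rintro rfl; exact hu hw) h
  exact hu fun x => (hw x).tail hwu

theorem terminalSet_nonempty [Finite V] [Nonempty V] (hT : IsTournament A) :
    (terminalSet A).Nonempty := by
  classical
  have := Fintype.ofFinite V
  let reachIn (v : V) := Finset.univ.filter fun u => ReflTransGen A u v
  obtain ⟨v, -, hv⟩ := Finset.exists_max_image Finset.univ (fun v => (reachIn v).card)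
    Finset.univ_nonempty
  -- `v` is reached from the most vertices, and whatever reaches `v` reaches each `u` with `v → u`
  refine ⟨v, fun u => ?_⟩
  by_cases huv : u = v ∨ A u v
  · rcases huv with rfl | huv
    exacts [.refl, .single huv]
  push Not at huv
  have hvu := hT.adj_of_not_adj huv.1 huv.2
  have hsub : reachIn v ⊆ reachIn u := by
    intro x hx
    simp only [reachIn, Finset.mem_filter, Finset.mem_univ, true_and] at hx ⊢
    exact hx.tail hvu
  have heq := Finset.eq_of_subset_of_card_le hsub (hv u (Finset.mem_univ _))
  have hu : u ∈ reachIn u := by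
    simp only [reachIn, Finset.mem_filter]
    exact ⟨Finset.mem_univ _, .refl⟩
  simpa [← heq, reachIn] using hu

theorem isInDominating_image_val (hT : IsTournament A) {X : Set (terminalSet A)}
    (hX : IsInDominating (fun a b : terminalSet A => A a b) X) (hne : X.Nonempty) :
    IsInDominating A (Subtype.val '' X) := by
  intro u hu
  by_cases huS : u ∈ terminalSet A
  · obtain ⟨w, hw, huw⟩ := hX ⟨u, huS⟩ fun h => hu ⟨_, h, rfl⟩
    exact ⟨w, ⟨w, hw, rfl⟩, huw⟩
  · obtain ⟨w, hw⟩ := hne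
    exact ⟨w, ⟨w, hw, rfl⟩, hT.adj_of_not_mem_terminalSet huS w.2⟩

end IsTournament

end

/-- Every tournament on `n ≥ 5` vertices contains either an in-dominating vertex or an
in-dominating directed cycle of length at most `n - 2`. -/
theorem stmt1 {V : Type*} [Fintype V] (A : V → V → Prop) (hT : IsTournament A)
    (hn : 5 ≤ Fintype.card V) :
    (∃ v : V, ∀ u : V, u ≠ v → A u v) ∨
    (∃ m : ℕ, 2 ≤ m ∧ m ≤ Fintype.card V - 2 ∧
      ∃ φ : ZMod m → V, Function.Injective φ ∧ (∀ i, A (φ i) (φ (i + 1))) ∧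
        ∀ u : V, u ∉ Set.range φ → ∃ w ∈ Set.range φ, A u w) := by
  classical
  have : Nonempty V := Fintype.card_pos_iff.1 (by omega)
  obtain ⟨s, hs⟩ := hT.terminalSet_nonempty
  by_cases hsingle : ∀ u ∈ terminalSet A, u = s
  · exact .inl ⟨s, fun u hu => hT.adj_of_not_mem_terminalSet (fun h => hu (hsingle u h)) hs⟩
  push Not at hsingle
  obtain ⟨t, ht, hts⟩ := hsingle
  have h2 : 2 ≤ Fintype.card (terminalSet A) :=
    Fintype.one_lt_card_iff.2 ⟨⟨t, ht⟩, ⟨s, hs⟩, by simpa using hts⟩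
  obtain ⟨m, hm3, hm, ψ, hψ, hdom⟩ :=
    isStrong_terminalSet.exists_isInDominating_isDiCycle (hT.comp Subtype.val_injective) h2
  have hcard := set_fintype_card_le_univ (terminalSet A)
  have : NeZero m := ⟨by omega⟩
  have hφ := hψ.comp Subtype.val_injective
  have hφdom : IsInDominating A (range (Subtype.val ∘ ψ)) := by
    rw [range_comp]
    exact hT.isInDominating_image_val hdom (range_nonempty ψ)
  exact .inr ⟨m, by omega, by omega, _, hφ.1, hφ.2, hφdom⟩
end

section
/- Every tournament T with minimum out-degree at least 3 which has an in-dominating set of size 2 admits a 2-out-colouring. -/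
/-!
Say `a → b` and pick `c ∈ N⁺(b)`. Every vertex has an out-neighbour in `{a, b, c}`, so colouring
`{a, b, c}` with one colour and everything else with the other works as soon as no
out-neighbourhood equals `{a, b, c}`, out-degrees being at least 3.
Such a `c` exists: if `N⁺(v₁) = {a, b, c₁}` and `N⁺(v₂) = {a, b, c₂}` with `b → c₁, c₂`, then
the arc between `v₁` and `v₂` would have to end in `{a, b, cᵢ}`, which is impossible; so
`v₁ = v₂`, hence `c₁ = c₂`, and at most one out-neighbour of `b` is bad.
-/

section

variable {V : Type*} {A : V → V → Prop}

theorem IsTournament.ne_of_adj_s3 (hT : IsTournament A) {u v : V} (h : A u v) : u ≠ v := by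
  rintro rfl
  exact hT.1 u h

theorem IsTournament.not_adj_of_adj_s3 (hT : IsTournament A) {u v : V} (h : A u v) : ¬ A v u := by
  rcases hT.2 u v (hT.ne_of_adj_s3 h) with ⟨_, h'⟩ | ⟨_, h'⟩
  exacts [h', absurd h h']

theorem IsTournament.adj_or_adj (hT : IsTournament A) {u v : V} (h : u ≠ v) : A u v ∨ A v u := by
  rcases hT.2 u v h with ⟨h', _⟩ | ⟨h', _⟩
  exacts [Or.inl h', Or.inr h']

theorem hasOutColouring_two_of_separating (S : Set V) (hin : ∀ v, ∃ u ∈ S, A v u)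
    (hout : ∀ v, ∃ w ∉ S, A v w) : HasOutColouring A 2 := by
  classical
  refine ⟨fun v => if v ∈ S then 0 else 1, fun v => ?_⟩
  obtain ⟨u, hu, hvu⟩ := hin v
  obtain ⟨w, hw, hvw⟩ := hout v
  exact ⟨u, w, hvu, hvw, by simp [hu, hw]⟩

theorem exists_adj_notMem_of_ncard_le {t : Set V} (ht : t.Finite) {v : V}
    (hcard : t.ncard ≤ {w | A v w}.ncard) (hne : {w | A v w} ≠ t) : ∃ w ∉ t, A v w := by
  obtain ⟨w, hw, hwt⟩ :=
    Set.not_subset.mp fun hsub => hne (Set.eq_of_subset_of_ncard_le hsub hcard ht)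
  exact ⟨w, hwt, hw⟩

theorem IsTournament.not_adj_of_outNbhd_eq_triple (hT : IsTournament A) {a b c v₁ v₂ : V}
    (hbc : A b c) (hv₁ : {w | A v₁ w} = {a, b, c}) (hv₂a : A v₂ a) (hv₂b : A v₂ b) :
    ¬ A v₁ v₂ := by
  intro h
  have hv₂ : v₂ ∈ ({a, b, c} : Set V) := hv₁ ▸ h
  rcases hv₂ with rfl | rfl | rfl
  · exact hT.ne_of_adj_s3 hv₂a rfl
  · exact hT.ne_of_adj_s3 hv₂b rfl
  · exact hT.not_adj_of_adj_s3 hbc hv₂b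

theorem IsTournament.eq_of_outNbhd_eq_triple (hT : IsTournament A) {a b c₁ c₂ v₁ v₂ : V}
    (hbc₁ : A b c₁) (hbc₂ : A b c₂) (hv₁ : {w | A v₁ w} = {a, b, c₁})
    (hv₂ : {w | A v₂ w} = {a, b, c₂}) : v₁ = v₂ := by
  have mem_of_eq {v c x : V} (hv : {w | A v w} = {a, b, c}) (hx : x ∈ ({a, b, c} : Set V)) :
      A v x := by
    rw [← hv] at hx
    exact hx
  by_contra hne
  rcases hT.adj_or_adj hne with h | h
  · exact hT.not_adj_of_outNbhd_eq_triple hbc₁ hv₁ (mem_of_eq hv₂ (by simp))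
      (mem_of_eq hv₂ (by simp)) h
  · exact hT.not_adj_of_outNbhd_eq_triple hbc₂ hv₂ (mem_of_eq hv₁ (by simp))
      (mem_of_eq hv₁ (by simp)) h

theorem IsTournament.exists_adj_forall_outNbhd_ne_triple (hT : IsTournament A) {a b : V}
    (hab : A a b) (hb : 1 < {w | A b w}.ncard) :
    ∃ c, A b c ∧ ∀ v, {w | A v w} ≠ {a, b, c} := by
  by_contra! hbad
  obtain ⟨c₁, hc₁⟩ := Set.nonempty_of_ncard_ne_zero (s := {w | A b w}) (by omega)
  obtain ⟨c₂, hc₂, hne⟩ := Set.exists_ne_of_one_lt_ncard hb c₁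
  obtain ⟨v₁, hv₁⟩ := hbad c₁ hc₁
  obtain ⟨v₂, hv₂⟩ := hbad c₂ hc₂
  have htriple : ({a, b, c₂} : Set V) = {a, b, c₁} := by
    rw [← hv₁, ← hv₂, hT.eq_of_outNbhd_eq_triple hc₁ hc₂ hv₁ hv₂]
  have hc₂mem : c₂ ∈ ({a, b, c₁} : Set V) := htriple ▸ by simp
  rcases hc₂mem with rfl | rfl | rfl
  · exact hT.not_adj_of_adj_s3 hab hc₂
  · exact hT.ne_of_adj_s3 hc₂ rfl
  · exact hne rfl

theorem IsTournament.hasOutColouring_two_of_inDominating_adj (hT : IsTournament A)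
    (hδ : ∀ v : V, 3 ≤ {w | A v w}.ncard) {a b : V} (hab : A a b)
    (hdom : ∀ u : V, u ≠ a → u ≠ b → A u a ∨ A u b) : HasOutColouring A 2 := by
  obtain ⟨c, hbc, hc⟩ := hT.exists_adj_forall_outNbhd_ne_triple hab (by linarith [hδ b])
  refine hasOutColouring_two_of_separating {a, b, c} (fun v => ?_) (fun v => ?_)
  · by_cases hva : v = a
    · exact ⟨b, by simp, hva ▸ hab⟩
    by_cases hvb : v = b
    · exact ⟨c, by simp, hvb ▸ hbc⟩
    rcases hdom v hva hvb with h | h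
    · exact ⟨a, by simp, h⟩
    · exact ⟨b, by simp, h⟩
  · have hcard : ({a, b, c} : Set V).ncard ≤ 3 :=
      (Set.ncard_insert_le _ _).trans (by grw [Set.ncard_insert_le, Set.ncard_singleton])
    exact exists_adj_notMem_of_ncard_le (Set.toFinite _) (hcard.trans (hδ v)) (hc v)

end

theorem stmt3_general {V : Type*} (A : V → V → Prop) (hT : IsTournament A)
    (hδ : ∀ v : V, 3 ≤ {w | A v w}.ncard)
    (hdom : ∃ a b : V, a ≠ b ∧ ∀ u : V, u ≠ a → u ≠ b → A u a ∨ A u b) :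
    HasOutColouring A 2 := by
  obtain ⟨a, b, hne, hdom⟩ := hdom
  rcases hT.adj_or_adj hne with hab | hba
  · exact hT.hasOutColouring_two_of_inDominating_adj hδ hab hdom
  · exact hT.hasOutColouring_two_of_inDominating_adj hδ hba fun u hb ha => (hdom u ha hb).symm

/-- Every tournament with minimum out-degree at least 3 which has an in-dominating set
of size 2 admits a 2-out-colouring. -/
theorem stmt3 {V : Type*} [Fintype V] (A : V → V → Prop) (hT : IsTournament A)
    (hδ : ∀ v : V, 3 ≤ {w | A v w}.ncard)
    (hdom : ∃ a b : V, a ≠ b ∧ ∀ u : V, u ≠ a → u ≠ b → A u a ∨ A u b) :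
    HasOutColouring A 2 :=
  stmt3_general A hT hδ hdom
end

section
/- Every semicomplete digraph T with minimum out-degree at least 3 which admits an in-dominating set of size 2 has a 2-out-colouring. -/
/-- A semicomplete digraph: no loops, and every pair of distinct vertices is joined by
at least one arc (possibly one in each direction). -/
def IsSemicomplete {V : Type*} (A : V → V → Prop) : Prop :=
  (∀ v : V, ¬ A v v) ∧ ∀ u v : V, u ≠ v → A u v ∨ A v u

/-!
Let `{x, y}` be the in-dominating pair, with an arc `x → y`. It suffices to find a set `C`
such that both `C` and its complement meet every out-neighbourhood.
* If also `y → x`, take `C = {x, y}`.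
* If every other vertex has an arc to `y`, take `C = {y, e}ᶜ` for an out-neighbour `e` of `y`.
* Otherwise `y → g` for some `g` with no arc `g → y`. Among three out-neighbours `d` of `y`
  (one of them `g`) some `{x, y, d}` contains no out-neighbourhood, and `C = {x, y, d}` works:
  if the out-neighbourhoods of `v₁, v₂, v₃` were exactly `{x, y, g}, {x, y, d₂}, {x, y, d₃}`,
  semicompleteness between `v₁` and `vᵢ` would force `v₁ = d₂` and `v₁ = d₃`.
-/

lemma Set.eq_of_subset_triple {α : Type*} {s : Set α} {a b c : α} (h : s ⊆ {a, b, c})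
    (hs : 3 ≤ s.ncard) : s = {a, b, c} := by
  refine Set.eq_of_subset_of_ncard_le h (le_trans ?_ hs)
  have hab := Set.ncard_insert_le a {b, c}
  have hbc := Set.ncard_insert_le b {c}
  rw [Set.ncard_singleton] at hbc
  omega

section OutColouring

variable {V : Type*} {A : V → V → Prop}

lemma exists_adj_ne_ne {v : V} (hv : 3 ≤ {w | A v w}.ncard) (p q : V) :
    ∃ w, A v w ∧ w ≠ p ∧ w ≠ q := by
  have hpq := Set.ncard_insert_le p {q}
  rw [Set.ncard_singleton] at hpq
  obtain ⟨w, hw, hwpq⟩ :=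
    Set.exists_mem_notMem_of_ncard_lt_ncard (s := {p, q}) (t := {w | A v w})
      (by omega)
  simp only [Set.mem_insert_iff, Set.mem_singleton_iff, not_or] at hwpq
  exact ⟨w, hw, hwpq⟩

def SplitsOutNbhds (A : V → V → Prop) (C : Set V) : Prop :=
  ∀ v, (∃ u ∈ C, A v u) ∧ ∃ w ∉ C, A v w

lemma SplitsOutNbhds.hasOutColouring {C : Set V} (h : SplitsOutNbhds A C) :
    HasOutColouring A 2 := by
  classical
  refine ⟨fun v => if v ∈ C then 0 else 1, fun v => ?_⟩
  obtain ⟨⟨u, huC, hu⟩, w, hwC, hw⟩ := h v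
  exact ⟨u, w, hu, hw, by simp [huC, hwC]⟩

lemma exists_adj_mem_of_forall_adj_or_adj {x y : V} {C : Set V}
    (hdom : ∀ u : V, u ≠ x → u ≠ y → A u x ∨ A u y) (hxC : x ∈ C) (hyC : y ∈ C)
    (hx : ∃ u ∈ C, A x u) (hy : ∃ u ∈ C, A y u) (v : V) : ∃ u ∈ C, A v u := by
  rcases eq_or_ne v x with rfl | hvx
  · exact hx
  rcases eq_or_ne v y with rfl | hvy
  · exact hy
  rcases hdom v hvx hvy with h | h
  · exact ⟨x, hxC, h⟩
  · exact ⟨y, hyC, h⟩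

lemma splitsOutNbhds_pair_of_adj_of_adj (hδ : ∀ v : V, 3 ≤ {w | A v w}.ncard) {x y : V}
    (hdom : ∀ u : V, u ≠ x → u ≠ y → A u x ∨ A u y) (hxy : A x y) (hyx : A y x) :
    SplitsOutNbhds A {x, y} := by
  refine fun v => ⟨exists_adj_mem_of_forall_adj_or_adj hdom (by simp) (by simp)
    ⟨y, by simp, hxy⟩ ⟨x, by simp, hyx⟩ v, ?_⟩
  obtain ⟨w, hw, hwx, hwy⟩ := exists_adj_ne_ne (hδ v) x y
  exact ⟨w, by simp [hwx, hwy], hw⟩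

lemma splitsOutNbhds_compl_pair_of_forall_adj (hδ : ∀ v : V, 3 ≤ {w | A v w}.ncard) {y : V}
    (hy : ∀ u, u ≠ y → A u y) {e : V} (hye : A y e) :
    SplitsOutNbhds A {y, e}ᶜ := by
  refine fun v => ⟨?_, ?_⟩
  · obtain ⟨w, hw, hwy, hwe⟩ := exists_adj_ne_ne (hδ v) y e
    exact ⟨w, by simp [hwy, hwe], hw⟩
  · rcases eq_or_ne v y with rfl | hvy
    · exact ⟨e, by simp, hye⟩
    · exact ⟨y, by simp, hy v hvy⟩

lemma splitsOutNbhds_triple {x y d : V} (hdom : ∀ u : V, u ≠ x → u ≠ y → A u x ∨ A u y)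
    (hxy : A x y) (hyd : A y d)
    (hd : ∀ v, ¬ {w | A v w} ⊆ {x, y, d}) : SplitsOutNbhds A {x, y, d} := by
  refine fun v => ⟨exists_adj_mem_of_forall_adj_or_adj hdom (by simp) (by simp)
    ⟨y, by simp, hxy⟩ ⟨d, by simp, hyd⟩ v, ?_⟩
  obtain ⟨w, hw, hwC⟩ := Set.not_subset.mp (hd v)
  exact ⟨w, hwC, hw⟩

lemma eq_of_outNbhd_subset_triple (hT : IsSemicomplete A) (hδ : ∀ v : V, 3 ≤ {w | A v w}.ncard)
    {x y g d v₁ v₂ : V} (hgy : ¬ A g y) (hdx : d ≠ x) (hdy : d ≠ y) (hdg : d ≠ g)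
    (h₁ : {w | A v₁ w} ⊆ {x, y, g}) (h₂ : {w | A v₂ w} ⊆ {x, y, d}) : v₁ = d := by
  have e₁ := Set.ext_iff.mp (Set.eq_of_subset_triple h₁ (hδ v₁))
  have e₂ := Set.ext_iff.mp (Set.eq_of_subset_triple h₂ (hδ v₂))
  simp only [Set.mem_ofPred_eq, Set.mem_insert_iff, Set.mem_singleton_iff] at e₁ e₂
  have hv₁x : v₁ ≠ x := fun h => hT.1 x (h ▸ (e₁ x).2 (by simp))
  have hv₁y : v₁ ≠ y := fun h => hT.1 y (h ▸ (e₁ y).2 (by simp))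
  have hv₂x : v₂ ≠ x := fun h => hT.1 x (h ▸ (e₂ x).2 (by simp))
  have hv₂y : v₂ ≠ y := fun h => hT.1 y (h ▸ (e₂ y).2 (by simp))
  have hv₂g : v₂ ≠ g := fun h => hgy (h ▸ (e₂ y).2 (by simp))
  have hv₁₂ : v₁ ≠ v₂ := by
    rintro rfl
    simpa [hdx, hdy, hdg] using (e₁ d).1 ((e₂ d).2 (by simp))
  rcases hT.2 v₁ v₂ hv₁₂ with h | h
  · simpa [hv₂x, hv₂y, hv₂g] using (e₁ v₂).1 h
  · simpa [hv₁x, hv₁y] using (e₂ v₁).1 h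

lemma exists_adj_forall_not_outNbhd_subset (hT : IsSemicomplete A)
    (hδ : ∀ v : V, 3 ≤ {w | A v w}.ncard) {x y g : V} (hyx : ¬ A y x) (hyg : A y g)
    (hgy : ¬ A g y) : ∃ d, A y d ∧ ∀ v, ¬ {w | A v w} ⊆ {x, y, d} := by
  obtain ⟨d₂, hyd₂, hd₂g, -⟩ := exists_adj_ne_ne (hδ y) g g
  obtain ⟨d₃, hyd₃, hd₃g, hd₃d₂⟩ := exists_adj_ne_ne (hδ y) g d₂
  have hne : ∀ {d}, A y d → d ≠ x ∧ d ≠ y := fun h =>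
    ⟨fun e => hyx (e ▸ h), fun e => hT.1 y (e ▸ h)⟩
  by_contra! hbad
  obtain ⟨v₁, h₁⟩ := hbad g hyg
  obtain ⟨v₂, h₂⟩ := hbad d₂ hyd₂
  obtain ⟨v₃, h₃⟩ := hbad d₃ hyd₃
  have e₂ := eq_of_outNbhd_subset_triple hT hδ hgy (hne hyd₂).1 (hne hyd₂).2 hd₂g h₁ h₂
  have e₃ := eq_of_outNbhd_subset_triple hT hδ hgy (hne hyd₃).1 (hne hyd₃).2 hd₃g h₁ h₃
  exact hd₃d₂ (e₃.symm.trans e₂)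

lemma exists_splitsOutNbhds (hT : IsSemicomplete A) (hδ : ∀ v : V, 3 ≤ {w | A v w}.ncard)
    {x y : V} (hdom : ∀ u : V, u ≠ x → u ≠ y → A u x ∨ A u y) (hxy : A x y) :
    ∃ C, SplitsOutNbhds A C := by
  by_cases hyx : A y x
  · exact ⟨_, splitsOutNbhds_pair_of_adj_of_adj hδ hdom hxy hyx⟩
  by_cases hy : ∀ u, u ≠ y → A u y
  · obtain ⟨e, hye, -⟩ := exists_adj_ne_ne (hδ y) y y
    exact ⟨_, splitsOutNbhds_compl_pair_of_forall_adj hδ hy hye⟩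
  push Not at hy
  obtain ⟨g, hgy, hng⟩ := hy
  obtain ⟨d, hyd, hd⟩ := exists_adj_forall_not_outNbhd_subset hT hδ hyx
    ((hT.2 y g hgy.symm).resolve_right hng) hng
  exact ⟨_, splitsOutNbhds_triple hdom hxy hyd hd⟩

end OutColouring

theorem stmt6_general {V : Type*} (A : V → V → Prop) (hT : IsSemicomplete A)
    (hδ : ∀ v : V, 3 ≤ {w | A v w}.ncard)
    (hdom : ∃ a b : V, a ≠ b ∧ ∀ u : V, u ≠ a → u ≠ b → A u a ∨ A u b) :
    HasOutColouring A 2 := by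
  obtain ⟨a, b, hab, hdom⟩ := hdom
  obtain ⟨C, hC⟩ := (hT.2 a b hab).elim (exists_splitsOutNbhds hT hδ hdom)
    (exists_splitsOutNbhds hT hδ fun u hb ha => (hdom u ha hb).symm)
  exact hC.hasOutColouring

/-- Every semicomplete digraph with minimum out-degree at least 3 which admits an
in-dominating set of size 2 has a 2-out-colouring. -/
theorem stmt6 {V : Type*} [Fintype V] (A : V → V → Prop) (hT : IsSemicomplete A)
    (hδ : ∀ v : V, 3 ≤ {w | A v w}.ncard)
    (hdom : ∃ a b : V, a ≠ b ∧ ∀ u : V, u ≠ a → u ≠ b → A u a ∨ A u b) :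
    HasOutColouring A 2 :=
  stmt6_general A hT hδ hdom
end

section
/- Every semicomplete digraph with minimum out-degree at least 2 admits a 3-out-colouring. -/
/-!
Let `S` be a smallest set meeting every out-neighbourhood. Minimality gives each `b ∈ S` a
private vertex `u_b` with `N⁺(u_b) ∩ S = {b}`, and distinct `b` have distinct `u_b`. Call `v`
closed if `N⁺(v) ⊆ S`: a closed vertex is never private (its out-degree is at least two), and by
semicompleteness every vertex outside `S` dominates every closed vertex. So at most one closed
vertex lies in `S` (otherwise all `u_b` lie in `S` minus two closed vertices) and at most one
lies outside `S`; counting the `u_b` once more then shows that some `b ∈ S` lies in every closed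
out-neighbourhood. Colouring `b` with `2`, the rest of `S` with `1` and everything else with `0`
works: an out-neighbourhood avoiding `b` meets both `S \ {b}` and the complement of `S`.
-/

open Finset

theorem Finset.card_le_card_of_forall_exists_eq_singleton {α β : Type*} [DecidableEq β]
    (f : α → Finset β) {T : Finset β} {R : Finset α} (h : ∀ b ∈ T, ∃ u ∈ R, f u = {b}) :
    #T ≤ #R :=
  calc #T = #(T.image singleton) := (card_image_of_injective _ singleton_injective).symm
    _ ≤ #(R.image f) := card_le_card fun s hs => by
        obtain ⟨b, hb, rfl⟩ := mem_image.mp hs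
        obtain ⟨u, hu, hfu⟩ := h b hb
        exact mem_image.mpr ⟨u, hu, hfu⟩
    _ ≤ #R := card_image_le

section OutNeighbourhoods

variable {V : Type*} {A : V → V → Prop}

variable (A) in
def IsOutTransversal (S : Finset V) : Prop := ∀ v, ∃ w ∈ S, A v w

lemma IsOutTransversal.nonempty [Nonempty V] {S : Finset V} (hS : IsOutTransversal A S) :
    S.Nonempty :=
  let ⟨w, hw, _⟩ := hS (Classical.arbitrary V)
  ⟨w, hw⟩

variable [Fintype V] [DecidableRel A]

variable (A) in
def outNbhd (v : V) : Finset V := {w | A v w}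

@[simp]
lemma mem_outNbhd {v w : V} : w ∈ outNbhd A v ↔ A v w := by
  simp [outNbhd]

lemma ncard_setOf_eq_card_outNbhd (v : V) : {w | A v w}.ncard = #(outNbhd A v) := by
  rw [← Set.ncard_coe_finset, outNbhd, coe_filter]
  simp

lemma IsSemicomplete.adj_of_outNbhd_subset (hT : IsSemicomplete A) {S : Finset V} {v y : V}
    (hv : outNbhd A v ⊆ S) (hy : y ∉ S) (hvy : v ≠ y) : A y v :=
  (hT.2 v y hvy).resolve_left fun h => hy (hv (mem_outNbhd.mpr h))

variable [DecidableEq V]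

lemma exists_isOutTransversal_forall_private (h : ∀ v, ∃ w, A v w) :
    ∃ S : Finset V, IsOutTransversal A S ∧ ∀ b ∈ S, ∃ u, outNbhd A u ∩ S = {b} := by
  classical
  obtain ⟨S, hS, hmin⟩ := exists_min_image ({S | IsOutTransversal A S} : Finset (Finset V))
    card ⟨univ, mem_filter.mpr ⟨mem_univ _, fun v => by simpa using h v⟩⟩
  simp only [mem_filter, mem_univ, true_and] at hS hmin
  refine ⟨S, hS, fun b hb => ?_⟩
  have hnot : ¬ IsOutTransversal A (S.erase b) := fun h' =>
    (card_erase_lt_of_mem hb).not_ge (hmin _ h')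
  obtain ⟨u, hu⟩ : ∃ u, ∀ w ∈ S.erase b, ¬ A u w := by
    simpa [IsOutTransversal] using hnot
  have only_b : ∀ w ∈ S, A u w → w = b := fun w hw huw => by
    by_contra hwb
    exact hu w (mem_erase.mpr ⟨hwb, hw⟩) huw
  refine ⟨u, ext fun w => ⟨fun hw => ?_, fun hw => ?_⟩⟩
  · obtain ⟨huw, hwS⟩ := mem_inter.mp hw
    exact mem_singleton.mpr (only_b w hwS (mem_outNbhd.mp huw))
  · obtain ⟨w', hw'S, huw'⟩ := hS u
    obtain rfl := only_b w' hw'S huw'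
    rw [mem_singleton.mp hw]
    exact mem_inter.mpr ⟨mem_outNbhd.mpr huw', hw'S⟩

lemma not_outNbhd_subset_of_inter_eq_singleton {S : Finset V} {u b : V}
    (hu : 2 ≤ #(outNbhd A u)) (h : outNbhd A u ∩ S = {b}) : ¬ outNbhd A u ⊆ S := fun hsub => by
  rw [inter_eq_left.mpr hsub] at h
  rw [h, card_singleton] at hu
  omega

lemma hasOutColouring_three_of_forall_not_outNbhd_subset_erase
    (hδ : ∀ v, 2 ≤ #(outNbhd A v)) {S : Finset V} (hS : IsOutTransversal A S) {b : V}
    (hb : ∀ v, ¬ outNbhd A v ⊆ S.erase b) : HasOutColouring A 3 := by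
  refine ⟨fun u => if u = b then 2 else if u ∈ S then 1 else 0, fun v => ?_⟩
  by_cases hvb : A v b
  · obtain ⟨w, hw, hwb⟩ := exists_mem_ne (hδ v) b
    refine ⟨b, w, hvb, mem_outNbhd.mp hw, ?_⟩
    by_cases hwS : w ∈ S <;> simp [hwb, hwS]
  · obtain ⟨u, huS, hvu⟩ := hS v
    obtain ⟨w, hw, hwS⟩ := not_subset.mp (hb v)
    have hub : u ≠ b := by rintro rfl; exact hvb hvu
    have hwb : w ≠ b := by rintro rfl; exact hvb (mem_outNbhd.mp hw)
    refine ⟨u, w, hvu, mem_outNbhd.mp hw, ?_⟩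
    have hwS' : w ∉ S := fun h => hwS (mem_erase.mpr ⟨hwb, h⟩)
    simp [hub, huS, hwb, hwS']

namespace IsSemicomplete

lemma eq_of_outNbhd_subset_of_notMem (hT : IsSemicomplete A) {S : Finset V} {v w : V}
    (hv : outNbhd A v ⊆ S) (hw : outNbhd A w ⊆ S) (hvS : v ∉ S) (hwS : w ∉ S) : v = w := by
  by_contra hvw
  exact hvS (hw (mem_outNbhd.mpr (hT.adj_of_outNbhd_subset hv hwS hvw)))

lemma eq_of_inter_eq_singleton_of_notMem (hT : IsSemicomplete A) {S : Finset V} {u b p : V}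
    (hu : outNbhd A u ∩ S = {b}) (huS : u ∉ S) (hp : outNbhd A p ⊆ S) (hpS : p ∈ S) :
    p = b := by
  have hpu : p ∈ outNbhd A u ∩ S := mem_inter.mpr
    ⟨mem_outNbhd.mpr (hT.adj_of_outNbhd_subset hp huS (ne_of_mem_of_not_mem hpS huS)), hpS⟩
  rwa [hu, mem_singleton] at hpu

lemma eq_of_outNbhd_subset_of_mem (hT : IsSemicomplete A) (hδ : ∀ v, 2 ≤ #(outNbhd A v))
    {S : Finset V} (hpriv : ∀ b ∈ S, ∃ u, outNbhd A u ∩ S = {b}) {v w : V}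
    (hv : outNbhd A v ⊆ S) (hw : outNbhd A w ⊆ S) (hvS : v ∈ S) (hwS : w ∈ S) : v = w := by
  by_contra hvw
  -- the private vertices are distinct and lie in `S \ {v, w}`
  have hcard : #S ≤ #((S.erase v).erase w) :=
    card_le_card_of_forall_exists_eq_singleton (fun u => outNbhd A u ∩ S) fun b hb => by
      obtain ⟨u, hu⟩ := hpriv b hb
      have huS : u ∈ S := by
        by_contra huS
        exact hvw ((hT.eq_of_inter_eq_singleton_of_notMem hu huS hv hvS).trans
          (hT.eq_of_inter_eq_singleton_of_notMem hu huS hw hwS).symm)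
      have hu_open := not_outNbhd_subset_of_inter_eq_singleton (hδ u) hu
      have huw : u ≠ w := by rintro rfl; exact hu_open hw
      have huv : u ≠ v := by rintro rfl; exact hu_open hv
      exact ⟨u, mem_erase.mpr ⟨huw, mem_erase.mpr ⟨huv, huS⟩⟩, hu⟩
  have h₁ := card_erase_lt_of_mem (mem_erase.mpr ⟨Ne.symm hvw, hwS⟩)
  have h₂ := card_erase_lt_of_mem hvS
  omega

lemma exists_pair_outNbhd_subset_mem_notMem (hT : IsSemicomplete A)
    (hδ : ∀ v, 2 ≤ #(outNbhd A v)) {S : Finset V}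
    (hpriv : ∀ b ∈ S, ∃ u, outNbhd A u ∩ S = {b}) (hne : S.Nonempty)
    (hcover : ∀ b ∈ S, ∃ v, outNbhd A v ⊆ S ∧ b ∉ outNbhd A v) :
    ∃ p q, outNbhd A p ⊆ S ∧ outNbhd A q ⊆ S ∧ p ∈ S ∧ q ∉ S := by
  obtain ⟨b₀, hb₀⟩ := hne
  obtain ⟨v, hv, -⟩ := hcover b₀ hb₀
  obtain ⟨b₁, hb₁⟩ := card_pos.mp (by have := hδ v; omega : 0 < #(outNbhd A v))
  obtain ⟨w, hw, hb₁w⟩ := hcover b₁ (hv hb₁)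
  have hvw : v ≠ w := by rintro rfl; exact hb₁w hb₁
  by_cases hvS : v ∈ S <;> by_cases hwS : w ∈ S
  · exact (hvw (hT.eq_of_outNbhd_subset_of_mem hδ hpriv hv hw hvS hwS)).elim
  · exact ⟨v, w, hv, hw, hvS, hwS⟩
  · exact ⟨w, v, hw, hv, hwS, hvS⟩
  · exact (hvw (hT.eq_of_outNbhd_subset_of_notMem hv hw hvS hwS)).elim

lemma exists_forall_not_outNbhd_subset_erase (hT : IsSemicomplete A)
    (hδ : ∀ v, 2 ≤ #(outNbhd A v)) {S : Finset V}
    (hpriv : ∀ b ∈ S, ∃ u, outNbhd A u ∩ S = {b}) (hne : S.Nonempty) :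
    ∃ b ∈ S, ∀ v, ¬ outNbhd A v ⊆ S.erase b := by
  by_contra! h
  have hcover : ∀ b ∈ S, ∃ v, outNbhd A v ⊆ S ∧ b ∉ outNbhd A v := fun b hb =>
    (h b hb).imp fun _ => subset_erase.mp
  obtain ⟨p, q, hp, hq, hpS, hqS⟩ :=
    hT.exists_pair_outNbhd_subset_mem_notMem hδ hpriv hne hcover
  have hdisj : Disjoint (outNbhd A p) (outNbhd A q) := disjoint_left.mpr fun c hcp hcq => by
    obtain ⟨z, hz, hcz⟩ := hcover c (hp hcp)
    by_cases hzS : z ∈ S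
    · obtain rfl := hT.eq_of_outNbhd_subset_of_mem hδ hpriv hz hp hzS hpS
      exact hcz hcp
    · obtain rfl := hT.eq_of_outNbhd_subset_of_notMem hz hq hzS hqS
      exact hcz hcq
  obtain ⟨c, hcq, hcp_ne⟩ := exists_mem_ne (hδ q) p
  have hcS := hq hcq
  have hcp_adj : A c p := (hT.2 p c hcp_ne.symm).resolve_left fun h =>
    disjoint_left.mp hdisj (mem_outNbhd.mpr h) hcq
  -- the private vertices of `S \ {p}` are distinct and lie in `S \ {p, c}`
  have hcard : #(S.erase p) ≤ #((S.erase p).erase c) :=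
    card_le_card_of_forall_exists_eq_singleton (fun u => outNbhd A u ∩ S) fun b hb => by
      obtain ⟨hbp, hbS⟩ := mem_erase.mp hb
      obtain ⟨u, hu⟩ := hpriv b hbS
      have huS : u ∈ S := by
        by_contra huS
        exact hbp (hT.eq_of_inter_eq_singleton_of_notMem hu huS hp hpS).symm
      have hup : u ≠ p := by
        rintro rfl; exact not_outNbhd_subset_of_inter_eq_singleton (hδ u) hu hp
      have huc : u ≠ c := by
        rintro rfl
        have hpu : p ∈ outNbhd A u ∩ S := mem_inter.mpr ⟨mem_outNbhd.mpr hcp_adj, hpS⟩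
        rw [hu, mem_singleton] at hpu
        exact hbp hpu.symm
      exact ⟨u, mem_erase.mpr ⟨huc, mem_erase.mpr ⟨hup, huS⟩⟩, hu⟩
  exact (card_erase_lt_of_mem (mem_erase.mpr ⟨hcp_ne, hcS⟩)).not_ge hcard

end IsSemicomplete

end OutNeighbourhoods

/-- Every semicomplete digraph with minimum out-degree at least 2 admits a
3-out-colouring. -/
theorem stmt8 {V : Type*} [Fintype V] (A : V → V → Prop) (hT : IsSemicomplete A)
    (hδ : ∀ v : V, 2 ≤ {w | A v w}.ncard) :
    HasOutColouring A 3 := by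
  classical
  cases isEmpty_or_nonempty V
  · exact ⟨isEmptyElim, isEmptyElim⟩
  have hδ' : ∀ v, 2 ≤ #(outNbhd A v) := fun v => ncard_setOf_eq_card_outNbhd (A := A) v ▸ hδ v
  have hout : ∀ v, ∃ w, A v w := fun v =>
    let ⟨w, hw⟩ := card_pos.mp (by have := hδ' v; omega : 0 < #(outNbhd A v))
    ⟨w, mem_outNbhd.mp hw⟩
  obtain ⟨S, hS, hpriv⟩ := exists_isOutTransversal_forall_private hout
  obtain ⟨b, -, hb⟩ := hT.exists_forall_not_outNbhd_subset_erase hδ' hpriv hS.nonempty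
  exact hasOutColouring_three_of_forall_not_outNbhd_subset_erase hδ' hS hb
end

section
/- Every semicomplete digraph on at least 7 vertices admits a 2-out-colouring if and only if it admits a balanced 2-out-colouring. -/
/-- `γ` is an out-colouring: no out-neighbourhood is monochromatic. -/
def IsOutColouring {V : Type*} (A : V → V → Prop) {r : ℕ} (γ : V → Fin r) : Prop :=
  ∀ v : V, ∃ u w : V, A v u ∧ A v w ∧ γ u ≠ γ w

/-!
Identify a 2-out-colouring with its colour class `X` of colour `0`. Complementing if necessary,
`|Xᶜ| ≤ |X|`, and it suffices to trade `X`, while `|X| ≥ |Xᶜ| + 2`, for a colour class with one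
vertex less.

Call `x ∈ X` pinned by `w` if `x` is the sole out-neighbour of `w` in `X`; an unpinned vertex
simply moves out. Otherwise at most three vertices of `X` are pinned from inside `X`: any two of
their pinners are joined by an arc, which must end at a pinner's target, so `k.choose 2 ≤ k`. The
other vertices of `X` are pinned injectively from outside, so `|X| - 3 ≤ |Xᶜ|`. Hence two or three
vertices are pinned inside, forming a digon, a path or a directed triangle, and at most one vertex
outside `X` pins nothing. In each configuration two vertices of `X`, typically one pinned by a
well-chosen `p ∉ X` and one pinned inside, are exchanged for a vertex `t ∉ X`, found by a case
analysis on the arcs outside `X`; `n ≥ 7` provides the few spare vertices outside `X` this needs.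
-/

theorem IsSemicomplete.ne_of_arc {V : Type*} {A : V → V → Prop} (hsc : IsSemicomplete A)
    {u v : V} (h : A u v) : u ≠ v :=
  fun huv => hsc.1 u (huv ▸ h)

theorem IsSemicomplete.arc_of_not_arc {V : Type*} {A : V → V → Prop} (hsc : IsSemicomplete A)
    {u v : V} (huv : u ≠ v) (h : ¬ A v u) : A u v :=
  (hsc.2 u v huv).resolve_right h

namespace BalancedOutColouring

open Finset

variable {V : Type*} {A : V → V → Prop}

/-- The colour classes of 2-out-colourings. -/
def IsOutColourClass (A : V → V → Prop) (X : Finset V) : Prop :=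
  ∀ v, (∃ u ∈ X, A v u) ∧ ∃ u ∉ X, A v u

def IsSoleOutNbr (A : V → V → Prop) (S : Finset V) (v t : V) : Prop :=
  A v t ∧ ∀ u ∈ S, A v u → u = t

section SoleOutNbr

variable {S : Finset V} {a b t t' v : V}

theorem IsSoleOutNbr.arc_to (hsc : IsSemicomplete A) (h : IsSoleOutNbr A S a t) (hv : v ∈ S)
    (hva : v ≠ a) (hvt : v ≠ t) : A v a :=
  hsc.arc_of_not_arc hva fun hav => hvt (h.2 v hv hav)

theorem IsSoleOutNbr.unique_right (h : IsSoleOutNbr A S v t) (h' : IsSoleOutNbr A S v t')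
    (ht : t ∈ S) : t = t' :=
  h'.2 t ht h.1

theorem IsSoleOutNbr.eq_or_eq (hsc : IsSemicomplete A) (ha : a ∈ S) (hb : b ∈ S) (hab : a ≠ b)
    (h : IsSoleOutNbr A S a t) (h' : IsSoleOutNbr A S b t') : t = b ∨ t' = a := by
  rcases hsc.2 a b hab with hA | hA
  · exact Or.inl (h.2 b hb hA).symm
  · exact Or.inr (h'.2 a ha hA).symm

theorem IsSoleOutNbr.unique_left (hsc : IsSemicomplete A) (ha : a ∈ S) (hb : b ∈ S)
    (h : IsSoleOutNbr A S a t) (h' : IsSoleOutNbr A S b t) : a = b := by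
  by_contra hab
  rcases h.eq_or_eq hsc ha hb hab h' with rfl | rfl
  · exact hsc.1 _ h'.1
  · exact hsc.1 _ h.1

/-- Each pair of vertices of `W` is `{w, t}` for some `w ∈ W` with sole out-neighbour `t`, so
`W.card.choose 2 ≤ W.card`. -/
theorem card_le_three_of_soleOutNbr [DecidableEq V] (hsc : IsSemicomplete A) {W : Finset V}
    (hWS : W ⊆ S) (h : ∀ w ∈ W, ∃ t, IsSoleOutNbr A S w t) : W.card ≤ 3 := by
  choose! f hf using h
  have hpairs : W.powersetCard 2 ⊆ W.image fun w => {w, f w} := by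
    intro s hs
    obtain ⟨hsW, hs2⟩ := mem_powersetCard.1 hs
    obtain ⟨a, b, hab, rfl⟩ := card_eq_two.1 hs2
    have ha : a ∈ W := hsW (by simp)
    have hb : b ∈ W := hsW (by simp)
    rcases (hf a ha).eq_or_eq hsc (hWS ha) (hWS hb) hab (hf b hb) with h | h
    · exact mem_image.2 ⟨a, ha, by rw [h]⟩
    · exact mem_image.2 ⟨b, hb, by rw [h, pair_comm]⟩
  have hle := (card_le_card hpairs).trans card_image_le
  rw [card_powersetCard, Nat.choose_two_right] at hle
  by_contra! h4
  have : W.card * 3 ≤ W.card * (W.card - 1) := Nat.mul_le_mul_left _ (by omega)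
  omega

theorem soleOutNbr_cycle (hsc : IsSemicomplete A) {w₁ w₂ w₃ t₁ t₂ t₃ : V}
    (hw₁ : w₁ ∈ S) (hw₂ : w₂ ∈ S) (hw₃ : w₃ ∈ S) (h₁₂ : w₁ ≠ w₂) (h₁₃ : w₁ ≠ w₃) (h₂₃ : w₂ ≠ w₃)
    (h₁ : IsSoleOutNbr A S w₁ t₁) (h₂ : IsSoleOutNbr A S w₂ t₂) (h₃ : IsSoleOutNbr A S w₃ t₃) :
    (t₁ = w₂ ∧ t₂ = w₃ ∧ t₃ = w₁) ∨ (t₁ = w₃ ∧ t₃ = w₂ ∧ t₂ = w₁) := by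
  have := h₁.eq_or_eq hsc hw₁ hw₂ h₁₂ h₂
  have := h₁.eq_or_eq hsc hw₁ hw₃ h₁₃ h₃
  have := h₂.eq_or_eq hsc hw₂ hw₃ h₂₃ h₃
  grind

theorem exists_arc_of_one_lt_card (hsc : IsSemicomplete A) {S : Finset V} (hS : 1 < S.card) :
    ∃ p ∈ S, ∃ t ∈ S, A p t := by
  obtain ⟨p, hp, t, ht, hpt⟩ := one_lt_card.1 hS
  rcases hsc.2 p t hpt with h | h
  · exact ⟨p, hp, t, ht, h⟩
  · exact ⟨t, ht, p, hp, h⟩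

theorem exists_arc_forall_soleOutNbr_eq (hsc : IsSemicomplete A) {p₀ : V} (hp₀ : p₀ ∈ S)
    (hp₀t : A p₀ t) : ∃ p ∈ S, A p t ∧ ∀ z ∈ S, IsSoleOutNbr A S z t → z = p := by
  by_cases h : ∃ p ∈ S, IsSoleOutNbr A S p t
  · obtain ⟨p, hp, hpt⟩ := h
    exact ⟨p, hp, hpt.1, fun z hz hzt => hzt.unique_left hsc hz hp hpt⟩
  · push Not at h
    exact ⟨p₀, hp₀, hp₀t, fun z hz hzt => absurd hzt (h z hz)⟩

end SoleOutNbr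

section InnerPinned

variable {X Y : Finset V} {ξ : V → V} {u v x y : V}

open Classical in
/-- `x` is pinned by `w` if it is the sole out-neighbour of `w` in `X`: then `x` cannot leave `X`
alone. -/
noncomputable def innerPinned (A : V → V → Prop) (X : Finset V) : Finset V :=
  X.filter fun x => ∃ w ∈ X, IsSoleOutNbr A X w x

theorem mem_innerPinned : x ∈ innerPinned A X ↔ x ∈ X ∧ ∃ w ∈ X, IsSoleOutNbr A X w x := by
  simp only [innerPinned, mem_filter]

theorem innerPinned_subset : innerPinned A X ⊆ X :=
  fun _ hx => (mem_innerPinned.1 hx).1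

theorem mem_innerPinned_of_soleOutNbr {w : V} (hw : w ∈ X) (hx : x ∈ X)
    (h : IsSoleOutNbr A X w x) : x ∈ innerPinned A X :=
  mem_innerPinned.2 ⟨hx, w, hw, h⟩

/-- `ξ` inverts a choice, for the vertices of `X` not pinned inside `X`, of a vertex outside
`X` pinning them. -/
structure IsOuterPinning (A : V → V → Prop) (X Y : Finset V) (ξ : V → V) : Prop where
  notMem : ∀ y ∈ Y, y ∉ X
  mem : ∀ y ∈ Y, ξ y ∈ X
  sole : ∀ y ∈ Y, IsSoleOutNbr A X y (ξ y)
  injOn : ∀ y ∈ Y, ∀ y' ∈ Y, ξ y = ξ y' → y = y'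
  notMem_innerPinned : ∀ y ∈ Y, ξ y ∉ innerPinned A X

theorem IsOuterPinning.arc_to (hP : IsOuterPinning A X Y ξ) (hsc : IsSemicomplete A)
    (hy : y ∈ Y) (hv : v ∈ X) (hne : v ≠ ξ y) : A v y :=
  (hP.sole y hy).arc_to hsc hv (ne_of_mem_of_not_mem hv (hP.notMem y hy)) hne

theorem IsOuterPinning.ne_of_mem_innerPinned (hP : IsOuterPinning A X Y ξ) (hy : y ∈ Y)
    (hs : u ∈ innerPinned A X) : ξ y ≠ u :=
  fun h => hP.notMem_innerPinned y hy (h ▸ hs)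

end InnerPinned

section ColourClass

variable [DecidableEq V] {X : Finset V} {x b t : V}

theorem IsOutColourClass.compl [Fintype V] (hg : IsOutColourClass A X) :
    IsOutColourClass A Xᶜ := fun v => ⟨by simpa using (hg v).2, by simpa using (hg v).1⟩

theorem IsOutColourClass.exists_ne_or_soleOutNbr_compl [Fintype V] (hg : IsOutColourClass A X)
    (v t : V) : (∃ u ∉ X, u ≠ t ∧ A v u) ∨ IsSoleOutNbr A Xᶜ v t := by
  by_cases h : ∃ u ∉ X, u ≠ t ∧ A v u
  · exact Or.inl h
  push Not at h
  obtain ⟨u, hu, hvu⟩ := (hg v).2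
  have hut : u = t := by_contra fun hut => h u hu hut hvu
  exact Or.inr ⟨hut ▸ hvu, fun w hw hvw => by_contra fun hwt => h w (mem_compl.1 hw) hwt hvw⟩

theorem card_innerPinned_le_three (hsc : IsSemicomplete A) (X : Finset V) :
    (innerPinned A X).card ≤ 3 := by
  have hpin : ∀ x ∈ innerPinned A X, ∃ w ∈ X, IsSoleOutNbr A X w x :=
    fun x hx => (mem_innerPinned.1 hx).2
  choose! w hwX hw using hpin
  have hinj : Set.InjOn w (innerPinned A X) := fun x hx x' hx' hxx' =>
    (hw x hx).unique_right (hxx' ▸ hw x' hx') (mem_innerPinned.1 hx).1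
  rw [← card_image_of_injOn hinj]
  refine card_le_three_of_soleOutNbr (S := X) hsc (fun _ h => ?_) (fun _ h => ?_)
  · obtain ⟨x, hx, rfl⟩ := mem_image.1 h
    exact hwX x hx
  · obtain ⟨x, hx, rfl⟩ := mem_image.1 h
    exact ⟨x, hw x hx⟩

theorem IsOutColourClass.erase (hg : IsOutColourClass A X) (hx : ¬ ∃ v, IsSoleOutNbr A X v x) :
    IsOutColourClass A (X.erase x) := by
  intro v
  obtain ⟨⟨u, hu, hvu⟩, ⟨u', hu', hvu'⟩⟩ := hg v
  refine ⟨?_, u', fun h => hu' (mem_of_mem_erase h), hvu'⟩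
  by_contra! hno
  refine hx ⟨v, ?_, fun w hw hvw => by_contra fun hwx => hno w (mem_erase.2 ⟨hwx, hw⟩) hvw⟩
  have hux : u = x := by_contra fun hux => hno u (mem_erase.2 ⟨hux, hu⟩) hvu
  exact hux ▸ hvu

def exchange (X : Finset V) (x b t : V) : Finset V :=
  insert t ((X.erase x).erase b)

theorem mem_exchange {u : V} : u ∈ exchange X x b t ↔ u = t ∨ u ≠ b ∧ u ≠ x ∧ u ∈ X := by
  simp [exchange]

theorem card_exchange (hx : x ∈ X) (hb : b ∈ X) (hxb : x ≠ b) (ht : t ∉ X) :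
    (exchange X x b t).card + 1 = X.card := by
  have ht' : t ∉ (X.erase x).erase b := fun h => ht (mem_of_mem_erase (mem_of_mem_erase h))
  rw [exchange, card_insert_of_notMem ht', card_erase_of_mem (mem_erase.2 ⟨hxb.symm, hb⟩),
    card_erase_of_mem hx]
  have := card_pos.2 ⟨x, hx⟩
  have : 1 < X.card := one_lt_card.2 ⟨x, hx, b, hb, hxb⟩
  omega

end ColourClass

section Exchange

variable [DecidableEq V] {X Y : Finset V} {ξ : V → V} {a b c d p t x u : V}

theorem notMem_exchange_of_notMem (hu : u ∉ X) (hut : u ≠ t) : u ∉ exchange X x b t := by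
  simp [mem_exchange, hu, hut]

theorem left_notMem_exchange (hx : x ∈ X) (ht : t ∉ X) : x ∉ exchange X x b t := by
  simp [mem_exchange, ne_of_mem_of_not_mem hx ht]

theorem right_notMem_exchange (hb : b ∈ X) (ht : t ∉ X) : b ∉ exchange X x b t := by
  simp [mem_exchange, ne_of_mem_of_not_mem hb ht]

theorem mem_exchange_of_mem (hu : u ∈ X) (hux : u ≠ x) (hub : u ≠ b) : u ∈ exchange X x b t :=
  mem_exchange.2 (Or.inr ⟨hub, hux, hu⟩)

theorem self_mem_exchange : t ∈ exchange X x b t :=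
  mem_exchange.2 (Or.inl rfl)

theorem isOutColourClass_exchange [Fintype V] (hsc : IsSemicomplete A)
    (hg : IsOutColourClass A X) (hx : x ∈ X) (hb : b ∈ X) (ht : t ∉ X)
    (hin : ∀ v, ∃ u ∈ exchange X x b t, A v u)
    (hout : ∀ v ∈ X, ∃ u ∉ exchange X x b t, A v u)
    (hsole : ∀ y ∉ X, y ≠ t → IsSoleOutNbr A Xᶜ y t → A y x ∨ A y b) :
    IsOutColourClass A (exchange X x b t) := by
  intro v
  refine ⟨hin v, ?_⟩
  by_cases hv : v ∈ X
  · exact hout v hv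
  by_cases hvt : v = t
  · obtain ⟨u, hu, hvu⟩ := (hg v).2
    exact ⟨u, notMem_exchange_of_notMem hu (hvt ▸ hsc.ne_of_arc hvu).symm, hvu⟩
  rcases hg.exists_ne_or_soleOutNbr_compl v t with ⟨u, hu, hut, hvu⟩ | hs
  · exact ⟨u, notMem_exchange_of_notMem hu hut, hvu⟩
  · rcases hsole v hv hvt hs with h | h
    · exact ⟨x, left_notMem_exchange hx ht, h⟩
    · exact ⟨b, right_notMem_exchange hb ht, h⟩

/-- Every `v ∈ X` other than `a` and `b` beats `a`, whose only out-neighbour in `X` is `b`. -/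
theorem exists_mem_exchange_of_pred (hsc : IsSemicomplete A) (hab : IsSoleOutNbr A X a b)
    (hbc : IsSoleOutNbr A X b c) (ha : a ∈ X) (hc : c ∈ X) (hax : a ≠ x) (hcx : c ≠ x)
    (hat : A a t) : ∀ v ∈ X, ∃ u ∈ exchange X x b t, A v u := by
  intro v hv
  by_cases hva : v = a
  · exact ⟨t, self_mem_exchange, hva ▸ hat⟩
  by_cases hvb : v = b
  · exact ⟨c, mem_exchange_of_mem hc hcx (hsc.ne_of_arc hbc.1).symm, hvb ▸ hbc.1⟩
  · exact ⟨a, mem_exchange_of_mem ha hax (hsc.ne_of_arc hab.1), hab.arc_to hsc hv hva hvb⟩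

theorem exists_mem_exchange_of_succ (hsc : IsSemicomplete A) (hcd : IsSoleOutNbr A X c d)
    (hc : c ∈ X) (hd : d ∈ X) (hcb : c ≠ b) (hcx : c ≠ x) (hdb : d ≠ b) (hdx : d ≠ x)
    (hdt : A d t) : ∀ v ∈ X, ∃ u ∈ exchange X x b t, A v u := by
  intro v hv
  by_cases hvd : v = d
  · exact ⟨t, self_mem_exchange, hvd ▸ hdt⟩
  by_cases hvc : v = c
  · exact ⟨d, mem_exchange_of_mem hd hdx hdb, hvc ▸ hcd.1⟩
  · exact ⟨c, mem_exchange_of_mem hc hcx hcb, hcd.arc_to hsc hv hvc hvd⟩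

theorem exists_notMem_exchange (hsc : IsSemicomplete A) (hbc : IsSoleOutNbr A X b c) (hb : b ∈ X)
    (ht : t ∉ X) (hbz : ∃ z ∉ X, z ≠ t ∧ A b z) (hcz : ∃ z ∉ X, z ≠ t ∧ A c z) :
    ∀ v ∈ X, ∃ u ∉ exchange X x b t, A v u := by
  intro v hv
  by_cases hvb : v = b
  · obtain ⟨z, hz, hzt, hbz⟩ := hbz
    exact ⟨z, notMem_exchange_of_notMem hz hzt, hvb ▸ hbz⟩
  by_cases hvc : v = c
  · obtain ⟨z, hz, hzt, hcz⟩ := hcz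
    exact ⟨z, notMem_exchange_of_notMem hz hzt, hvc ▸ hcz⟩
  · exact ⟨b, right_notMem_exchange hb ht, hbc.arc_to hsc hv hvb hvc⟩

variable [Fintype V]

/-- Exchange `ξ p` and `b` for `t`. -/
theorem exists_shrink_of_pinned_exchange (hsc : IsSemicomplete A) (hg : IsOutColourClass A X)
    (hP : IsOuterPinning A X Y ξ) (hbc : IsSoleOutNbr A X b c) (hb : b ∈ X) (hc : c ∈ X)
    (hp : p ∈ Y) (ht : t ∉ X) (hpt : A p t) (hpb : ξ p ≠ b)
    (hin : ∀ v ∈ X, ∃ u ∈ exchange X (ξ p) b t, A v u)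
    (hz : ∃ z ∈ Y, z ≠ t ∧ ξ z ≠ b ∧ ξ z ≠ c)
    (hYb : ∀ y ∈ Y, ξ y = b → A y t)
    (hrest : ∀ y ∉ X, y ∉ Y → ∃ u ∈ exchange X (ξ p) b t, A y u)
    (hsole : ∀ y ∉ X, IsSoleOutNbr A Xᶜ y t → y = p ∨ A y (ξ p) ∨ A y b) :
    ∃ X', IsOutColourClass A X' ∧ X'.card + 1 = X.card := by
  have hx := hP.mem p hp
  refine ⟨_, isOutColourClass_exchange hsc hg hx hb ht (fun v => ?_) ?_ ?_,
    card_exchange hx hb hpb ht⟩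
  · by_cases hv : v ∈ X
    · exact hin v hv
    by_cases hvY : v ∈ Y
    swap
    · exact hrest v hv hvY
    by_cases hvp : ξ v = ξ p
    · exact ⟨t, self_mem_exchange, hP.injOn v hvY p hp hvp ▸ hpt⟩
    by_cases hvb : ξ v = b
    · exact ⟨t, self_mem_exchange, hYb v hvY hvb⟩
    · exact ⟨ξ v, mem_exchange_of_mem (hP.mem v hvY) hvp hvb, (hP.sole v hvY).1⟩
  · obtain ⟨z, hzY, hzt, hzb, hzc⟩ := hz
    exact exists_notMem_exchange hsc hbc hb ht
      ⟨z, hP.notMem z hzY, hzt, hP.arc_to hsc hzY hb (Ne.symm hzb)⟩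
      ⟨z, hP.notMem z hzY, hzt, hP.arc_to hsc hzY hc (Ne.symm hzc)⟩
  · intro y hy _ hs
    rcases hsole y hy hs with rfl | h | h
    · exact Or.inl (hP.sole _ hp).1
    · exact Or.inl h
    · exact Or.inr h

/-- Exchange `ξ p` and `b` for `t`. -/
theorem exists_shrink_of_chain (hsc : IsSemicomplete A) (hg : IsOutColourClass A X)
    (hP : IsOuterPinning A X Y ξ) (hab : IsSoleOutNbr A X a b) (hbc : IsSoleOutNbr A X b c)
    (ha : a ∈ X) (hb : b ∈ X) (hc : c ∈ X) (hp : p ∈ Y) (ht : t ∉ X) (hpt : A p t)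
    (hpa : ξ p ≠ a) (hat : A a t) (hz : ∃ z ∈ Y, z ≠ t)
    (hrest : ∀ y ∉ X, y ∉ Y → ∃ u ∈ exchange X (ξ p) b t, A y u)
    (hsole : ∀ y ∉ X, IsSoleOutNbr A Xᶜ y t → y = p ∨ A y (ξ p) ∨ A y b) :
    ∃ X', IsOutColourClass A X' ∧ X'.card + 1 = X.card := by
  have hb' := mem_innerPinned_of_soleOutNbr ha hb hab
  have hc' := mem_innerPinned_of_soleOutNbr hb hc hbc
  obtain ⟨z, hzY, hzt⟩ := hz
  exact exists_shrink_of_pinned_exchange hsc hg hP hbc hb hc hp ht hpt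
    (hP.ne_of_mem_innerPinned hp hb')
    (exists_mem_exchange_of_pred hsc hab hbc ha hc hpa.symm
      (hP.ne_of_mem_innerPinned hp hc').symm hat)
    ⟨z, hzY, hzt, hP.ne_of_mem_innerPinned hzY hb', hP.ne_of_mem_innerPinned hzY hc'⟩
    (fun y hy h => absurd h (hP.ne_of_mem_innerPinned hy hb')) hrest hsole

end Exchange

section Shapes

variable [Fintype V] [DecidableEq V] {X : Finset V} {ξ : V → V} {a b c g u₂ u₃ : V}

/-- The case of a digon or a directed triangle of vertices pinned inside `X`. -/
theorem exists_shrink_of_closed_chain (hsc : IsSemicomplete A) (hg : IsOutColourClass A X)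
    (hP : IsOuterPinning A X Xᶜ ξ) (hab : IsSoleOutNbr A X a b) (hbc : IsSoleOutNbr A X b c)
    (ha : a ∈ innerPinned A X) (hb : b ∈ X) (hc : c ∈ X) (hq : 2 ≤ Xᶜ.card) :
    ∃ X', IsOutColourClass A X' ∧ X'.card + 1 = X.card := by
  obtain ⟨p₀, hp₀, t, ht, hp₀t⟩ := exists_arc_of_one_lt_card hsc hq
  obtain ⟨p, hp, hpt, huniq⟩ := exists_arc_forall_soleOutNbr_eq hsc hp₀ hp₀t
  have haX := (mem_innerPinned.1 ha).1
  exact exists_shrink_of_chain hsc hg hP hab hbc haX hb hc hp (mem_compl.1 ht) hpt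
    (hP.ne_of_mem_innerPinned hp ha)
    (hP.arc_to hsc ht haX (hP.ne_of_mem_innerPinned ht ha).symm) (exists_mem_ne hq t)
    (fun y hy hy' => absurd (mem_compl.2 hy) hy')
    (fun y hy hs => Or.inl (huniq y (mem_compl.2 hy) hs))

section Path

variable (hsc : IsSemicomplete A) (hg : IsOutColourClass A X) (hP : IsOuterPinning A X Xᶜ ξ)
  (h₁₂ : IsSoleOutNbr A X (ξ g) u₂) (h₂₃ : IsSoleOutNbr A X u₂ u₃) (hu₂ : u₂ ∈ X) (hu₃ : u₃ ∈ X)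
  (hgX : g ∈ Xᶜ) (hq : 3 ≤ Xᶜ.card)
include hsc hg hP h₁₂ h₂₃ hu₂ hu₃ hgX hq

/-- Exchange `ξ p` and `u₂` for `t`. -/
theorem exists_shrink_of_path_of_ne {p t : V} (hp : p ∈ Xᶜ) (ht : t ∈ Xᶜ) (hpg : p ≠ g)
    (htg : t ≠ g) (hpt : A p t) (huniq : ∀ z ∈ Xᶜ, IsSoleOutNbr A Xᶜ z t → z = p) :
    ∃ X', IsOutColourClass A X' ∧ X'.card + 1 = X.card := by
  have hξ : ∀ y ∈ Xᶜ, y ≠ g → ξ y ≠ ξ g := fun y hy hyg h => hyg (hP.injOn y hy g hgX h)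
  exact exists_shrink_of_chain hsc hg hP h₁₂ h₂₃ (hP.mem g hgX) hu₂ hu₃ hp (mem_compl.1 ht) hpt
    (hξ p hp hpg) (hP.arc_to hsc ht (hP.mem g hgX) (hξ t ht htg).symm)
    (exists_mem_ne (by omega) t) (fun y hy hy' => absurd (mem_compl.2 hy) hy')
    (fun y hy hs => Or.inl (huniq y (mem_compl.2 hy) hs))

/-- Exchange `ξ p` and `ξ g` for `t`. -/
theorem exists_shrink_of_path_of_eq {p t : V} (hp : p ∈ Xᶜ) (ht : t ∈ Xᶜ) (hpg : p ≠ g)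
    (htg : t ≠ g) (hpt : A p t) (hgt : A g t)
    (huniq : ∀ z ∈ Xᶜ, IsSoleOutNbr A Xᶜ z t → z = p ∨ z = g) :
    ∃ X', IsOutColourClass A X' ∧ X'.card + 1 = X.card := by
  have hξ : ∀ y ∈ Xᶜ, y ≠ g → ξ y ≠ ξ g := fun y hy hyg h => hyg (hP.injOn y hy g hgX h)
  have hu₂' := mem_innerPinned_of_soleOutNbr (hP.mem g hgX) hu₂ h₁₂
  have hu₃' := mem_innerPinned_of_soleOutNbr hu₂ hu₃ h₂₃
  obtain ⟨z, hz, hzt, hzg⟩ : ∃ z ∈ Xᶜ, z ≠ t ∧ z ≠ g := by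
    obtain ⟨z, hz, hzg⟩ := exists_mem_ne (s := (Xᶜ).erase t)
      (by rw [card_erase_of_mem ht]; omega) g
    exact ⟨z, mem_of_mem_erase hz, ne_of_mem_erase hz, hzg⟩
  refine exists_shrink_of_pinned_exchange hsc hg hP h₁₂ (hP.mem g hgX) hu₂ hp (mem_compl.1 ht)
    hpt (hξ p hp hpg) (exists_mem_exchange_of_succ hsc h₂₃ hu₂ hu₃ (hsc.ne_of_arc h₁₂.1).symm
      (hP.ne_of_mem_innerPinned hp hu₂').symm (hP.ne_of_mem_innerPinned hgX hu₃').symm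
      (hP.ne_of_mem_innerPinned hp hu₃').symm
      (hP.arc_to hsc ht hu₃ (hP.ne_of_mem_innerPinned ht hu₃').symm))
    ⟨z, hz, hzt, hξ z hz hzg, hP.ne_of_mem_innerPinned hz hu₂'⟩
    (fun y hy h => (hP.injOn y hy g hgX h) ▸ hgt)
    (fun y hy hy' => absurd (mem_compl.2 hy) hy') (fun y hy hs => ?_)
  rcases huniq y (mem_compl.2 hy) hs with h | rfl
  · exact Or.inl h
  · exact Or.inr (Or.inr (hP.sole y hgX).1)

theorem exists_shrink_of_path : ∃ X', IsOutColourClass A X' ∧ X'.card + 1 = X.card := by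
  obtain ⟨p₀, hp₀, t, ht, hp₀t⟩ := exists_arc_of_one_lt_card hsc
    (S := (Xᶜ).erase g) (by rw [card_erase_of_mem hgX]; omega)
  obtain ⟨p, hp, hpt, huniq⟩ :=
    exists_arc_forall_soleOutNbr_eq hsc (mem_of_mem_erase hp₀) hp₀t
  by_cases hpg : p = g
  · subst hpg
    exact exists_shrink_of_path_of_eq hsc hg hP h₁₂ h₂₃ hu₂ hu₃ hgX hq (mem_of_mem_erase hp₀)
      (mem_of_mem_erase ht) (ne_of_mem_erase hp₀) (ne_of_mem_erase ht) hp₀t hpt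
      (fun z hz hs => Or.inr (huniq z hz hs))
  · exact exists_shrink_of_path_of_ne hsc hg hP h₁₂ h₂₃ hu₂ hu₃ hgX hq hp (mem_of_mem_erase ht)
      hpg (ne_of_mem_erase ht) hpt huniq

end Path

end Shapes

section Slack

structure IsCyclicCore (A : V → V → Prop) (X : Finset V) (s₁ s₂ s₃ : V) : Prop where
  mem₁ : s₁ ∈ X
  mem₂ : s₂ ∈ X
  mem₃ : s₃ ∈ X
  sole₁₂ : IsSoleOutNbr A X s₁ s₂
  sole₂₃ : IsSoleOutNbr A X s₂ s₃
  sole₃₁ : IsSoleOutNbr A X s₃ s₁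

variable {X Y : Finset V} {ξ : V → V} {s₁ s₂ s₃ : V}

theorem IsCyclicCore.rotate (hC : IsCyclicCore A X s₁ s₂ s₃) : IsCyclicCore A X s₂ s₃ s₁ :=
  ⟨hC.mem₂, hC.mem₃, hC.mem₁, hC.sole₂₃, hC.sole₃₁, hC.sole₁₂⟩

theorem IsCyclicCore.exists_rotation (hC : IsCyclicCore A X s₁ s₂ s₃) {b : V}
    (hb : b = s₁ ∨ b = s₂ ∨ b = s₃) : ∃ a c, IsCyclicCore A X a b c := by
  rcases hb with rfl | rfl | rfl
  · exact ⟨s₃, s₂, hC.rotate.rotate⟩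
  · exact ⟨s₁, s₃, hC⟩
  · exact ⟨s₂, s₁, hC.rotate⟩

theorem IsCyclicCore.mem_innerPinned₁ (hC : IsCyclicCore A X s₁ s₂ s₃) :
    s₁ ∈ innerPinned A X :=
  mem_innerPinned_of_soleOutNbr hC.mem₃ hC.mem₁ hC.sole₃₁

theorem IsCyclicCore.exists_ne (hC : IsCyclicCore A X s₁ s₂ s₃) (hsc : IsSemicomplete A)
    (x : V) : ∃ b, (b = s₁ ∨ b = s₂ ∨ b = s₃) ∧ b ≠ x := by
  rcases eq_or_ne x s₁ with rfl | h
  · exact ⟨s₂, Or.inr (Or.inl rfl), (hsc.ne_of_arc hC.sole₁₂.1).symm⟩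
  · exact ⟨s₁, Or.inl rfl, h.symm⟩

theorem IsOuterPinning.ne_of_isCyclicCore (hP : IsOuterPinning A X Y ξ)
    (hC : IsCyclicCore A X s₁ s₂ s₃) {y b : V} (hy : y ∈ Y) (hb : b = s₁ ∨ b = s₂ ∨ b = s₃) :
    ξ y ≠ b := by
  obtain ⟨a, c, hC'⟩ := hC.exists_rotation hb
  exact hP.ne_of_mem_innerPinned hy hC'.rotate.mem_innerPinned₁

/- The vertices pinned inside `X` form the triangle `s₁ → s₂ → s₃ → s₁`, and `y₀` is the one
vertex outside `X` that pins nothing. -/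
variable [Fintype V] [DecidableEq V] {y₀ : V}
  (hsc : IsSemicomplete A) (hg : IsOutColourClass A X) (hC : IsCyclicCore A X s₁ s₂ s₃)
  (hP : IsOuterPinning A X ((Xᶜ).erase y₀) ξ) (hy₀ : y₀ ∈ Xᶜ) (hq : 3 ≤ Xᶜ.card)
include hsc hg hC hP hy₀ hq

/-- Exchange `ξ p` and a vertex `b` of the triangle for `t`. -/
theorem exists_shrink_of_slack_exchange {b p t : V} (hb : b = s₁ ∨ b = s₂ ∨ b = s₃)
    (hp : p ∈ (Xᶜ).erase y₀) (ht : t ∈ (Xᶜ).erase y₀) (hpt : A p t)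
    (hsole : ∀ z ∉ X, IsSoleOutNbr A Xᶜ z t → z = p ∨ A z (ξ p) ∨ A z b)
    (hy₀t : (∀ x ∈ X, A y₀ x → x = ξ p ∨ x = b) → A y₀ t) :
    ∃ X', IsOutColourClass A X' ∧ X'.card + 1 = X.card := by
  obtain ⟨a, c, hC'⟩ := hC.exists_rotation hb
  have ha := hC'.mem_innerPinned₁
  refine exists_shrink_of_chain hsc hg hP hC'.sole₁₂ hC'.sole₂₃ hC'.mem₁ hC'.mem₂ hC'.mem₃ hp
    (mem_compl.1 (mem_of_mem_erase ht)) hpt (hP.ne_of_mem_innerPinned hp ha)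
    (hP.arc_to hsc ht hC'.mem₁ (hP.ne_of_mem_innerPinned ht ha).symm)
    (exists_mem_ne (by rw [card_erase_of_mem hy₀]; omega) t) (fun y hy hyY => ?_) hsole
  obtain rfl : y = y₀ := by_contra fun h => hyY (mem_erase.2 ⟨h, mem_compl.2 hy⟩)
  by_cases hu : ∃ u ∈ X, u ≠ ξ p ∧ u ≠ b ∧ A y u
  · obtain ⟨u, hu, hup, hub, hyu⟩ := hu
    exact ⟨u, mem_exchange_of_mem hu hup hub, hyu⟩
  · push Not at hu
    refine ⟨t, self_mem_exchange, hy₀t fun x hx hyx => ?_⟩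
    by_contra! h
    exact hu x hx h.1 h.2 hyx

/-- Exchange `ξ q` and `s₁` for `y₀`. -/
theorem exists_shrink_of_slack_exchange_spare {q : V} (hqY : q ∈ (Xᶜ).erase y₀)
    (hqy₀ : A q y₀) (huniq : ∀ z ∉ X, IsSoleOutNbr A Xᶜ z y₀ → z = q)
    (hw : ∃ x ∈ X, A y₀ x ∧ x ≠ ξ q ∧ x ≠ s₁) (h₃ : A s₃ y₀) :
    ∃ X', IsOutColourClass A X' ∧ X'.card + 1 = X.card := by
  obtain ⟨z, hz, -⟩ := exists_mem_ne (by rw [card_erase_of_mem hy₀]; omega) q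
  obtain ⟨x, hx, hy₀x, hxq, hx₁⟩ := hw
  refine exists_shrink_of_chain hsc hg hP hC.sole₃₁ hC.sole₁₂ hC.mem₃ hC.mem₁ hC.mem₂ hqY
    (mem_compl.1 hy₀) hqy₀ (hP.ne_of_isCyclicCore hC hqY (Or.inr (Or.inr rfl))) h₃
    ⟨z, hz, ne_of_mem_erase hz⟩ (fun y hy hyY => ?_) (fun y hy hs => Or.inl (huniq y hy hs))
  obtain rfl : y = y₀ := by_contra fun h => hyY (mem_erase.2 ⟨h, mem_compl.2 hy⟩)
  exact ⟨x, mem_exchange_of_mem hx hxq hx₁, hy₀x⟩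

/-- Exchange `s₃` and `s₂` for `y₁`. -/
theorem exists_shrink_of_slack_exchange_core {y₁ : V} (hy₁ : y₁ ∈ (Xᶜ).erase y₀)
    (hno : ∀ z ∉ X, z ≠ y₁ → ¬ IsSoleOutNbr A Xᶜ z y₁)
    (hw : ∃ x ∈ X, A y₀ x ∧ x ≠ s₃ ∧ x ≠ s₂) :
    ∃ X', IsOutColourClass A X' ∧ X'.card + 1 = X.card := by
  have hy₁X := mem_compl.1 (mem_of_mem_erase hy₁)
  have hcore : ∀ y ∈ (Xᶜ).erase y₀, ξ y ≠ s₁ ∧ ξ y ≠ s₂ ∧ ξ y ≠ s₃ := fun y hy =>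
    ⟨hP.ne_of_isCyclicCore hC hy (Or.inl rfl), hP.ne_of_isCyclicCore hC hy (Or.inr (Or.inl rfl)),
      hP.ne_of_isCyclicCore hC hy (Or.inr (Or.inr rfl))⟩
  obtain ⟨z, hz, hzy₁⟩ := exists_mem_ne (by rw [card_erase_of_mem hy₀]; omega) y₁
  have hzX := mem_compl.1 (mem_of_mem_erase hz)
  have h₁₂ := hsc.ne_of_arc hC.sole₁₂.1
  have h₂₃ := hsc.ne_of_arc hC.sole₂₃.1
  have h₃₁ := hsc.ne_of_arc hC.sole₃₁.1
  refine ⟨_, isOutColourClass_exchange hsc hg hC.mem₃ hC.mem₂ hy₁X (fun v => ?_)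
    (exists_notMem_exchange hsc hC.sole₂₃ hC.mem₂ hy₁X
      ⟨z, hzX, hzy₁, hP.arc_to hsc hz hC.mem₂ (hcore z hz).2.1.symm⟩
      ⟨z, hzX, hzy₁, hP.arc_to hsc hz hC.mem₃ (hcore z hz).2.2.symm⟩)
    (fun y hy hyy₁ hs => absurd hs (hno y hy hyy₁)),
    card_exchange hC.mem₃ hC.mem₂ h₂₃.symm hy₁X⟩
  by_cases hv : v ∈ X
  · by_cases hv₁ : v = s₁
    · exact ⟨y₁, self_mem_exchange, hv₁ ▸ hP.arc_to hsc hy₁ hC.mem₁ (hcore y₁ hy₁).1.symm⟩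
    by_cases hv₂ : v = s₂
    · exact ⟨y₁, self_mem_exchange, hv₂ ▸ hP.arc_to hsc hy₁ hC.mem₂ (hcore y₁ hy₁).2.1.symm⟩
    refine ⟨s₁, mem_exchange_of_mem hC.mem₁ h₃₁.symm h₁₂, ?_⟩
    by_cases hv₃ : v = s₃
    · exact hv₃ ▸ hC.sole₃₁.1
    · exact hC.sole₁₂.arc_to hsc hv hv₁ hv₂
  by_cases hvY : v ∈ (Xᶜ).erase y₀
  · exact ⟨ξ v, mem_exchange_of_mem (hP.mem v hvY) (hcore v hvY).2.2 (hcore v hvY).2.1,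
      (hP.sole v hvY).1⟩
  obtain rfl : v = y₀ := by_contra fun h => hvY (mem_erase.2 ⟨h, mem_compl.2 hv⟩)
  obtain ⟨x, hx, hvx, hx₃, hx₂⟩ := hw
  exact ⟨x, mem_exchange_of_mem hx hx₃ hx₂, hvx⟩

theorem exists_shrink_of_slack_of_arc_to_spare {p t : V} (hp : p ∈ (Xᶜ).erase y₀)
    (ht : t ∈ (Xᶜ).erase y₀) (hpt : IsSoleOutNbr A Xᶜ p t) (hty₀ : A t y₀)
    (hO : ∀ x ∈ X, A y₀ x → x = ξ p) :
    ∃ X', IsOutColourClass A X' ∧ X'.card + 1 = X.card := by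
  have h₃ : A s₃ y₀ := hsc.arc_of_not_arc (ne_of_mem_of_not_mem hC.mem₃ (mem_compl.1 hy₀))
    fun h => hP.ne_of_isCyclicCore hC hp (Or.inr (Or.inr rfl)) (hO s₃ hC.mem₃ h).symm
  obtain ⟨x₀, hx₀, hy₀x₀⟩ := (hg y₀).1
  obtain rfl := hO x₀ hx₀ hy₀x₀
  have hp₁ : ξ p ≠ s₁ := hP.ne_of_isCyclicCore hC hp (Or.inl rfl)
  have hξ : ∀ z ∈ (Xᶜ).erase y₀, z ≠ p → ξ p ≠ ξ z := fun z hz hzp h =>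
    hzp (hP.injOn z hz p hp h.symm)
  by_cases hz : ∃ z ∈ (Xᶜ).erase y₀, z ≠ t ∧ IsSoleOutNbr A Xᶜ z y₀
  · obtain ⟨z, hz, -, hzy₀⟩ := hz
    have hzp : z ≠ p := by
      rintro rfl
      exact ne_of_mem_erase ht (hzy₀.unique_right hpt hy₀).symm
    exact exists_shrink_of_slack_exchange_spare hsc hg hC hP hy₀ hq hz hzy₀.1
      (fun z' hz' hs => hs.unique_left hsc (mem_compl.2 hz') (mem_of_mem_erase hz) hzy₀)
      ⟨ξ p, hx₀, hy₀x₀, hξ z hz hzp, hp₁⟩ h₃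
  · push Not at hz
    refine exists_shrink_of_slack_exchange_spare hsc hg hC hP hy₀ hq ht hty₀
      (fun z hz' hs => ?_) ⟨ξ p, hx₀, hy₀x₀, hξ t ht (hsc.ne_of_arc hpt.1).symm, hp₁⟩ h₃
    by_contra hzt
    exact hz z (mem_erase.2 ⟨hsc.ne_of_arc hs.1, mem_compl.2 hz'⟩) hzt hs

theorem exists_shrink_of_slack_of_soleOutNbr {p t : V} (hp : p ∈ (Xᶜ).erase y₀)
    (ht : t ∈ (Xᶜ).erase y₀) (hpt : IsSoleOutNbr A Xᶜ p t) :
    ∃ X', IsOutColourClass A X' ∧ X'.card + 1 = X.card := by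
  have hsole : ∀ {b}, ∀ z ∉ X, IsSoleOutNbr A Xᶜ z t → z = p ∨ A z (ξ p) ∨ A z b :=
    fun z hz hs => Or.inl (hs.unique_left hsc (mem_compl.2 hz) (mem_of_mem_erase hp) hpt)
  by_cases hO : ∃ x ∈ X, A y₀ x ∧ x ≠ ξ p
  · obtain ⟨x, hx, hy₀x, hxp⟩ := hO
    obtain ⟨b, hb, hbx⟩ := hC.exists_ne hsc x
    refine exists_shrink_of_slack_exchange hsc hg hC hP hy₀ hq hb hp ht hpt.1 hsole
      fun hsub => ?_
    rcases hsub x hx hy₀x with h | h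
    · exact absurd h hxp
    · exact absurd h.symm hbx
  push Not at hO
  by_cases hy₀t : A y₀ t
  · exact exists_shrink_of_slack_exchange hsc hg hC hP hy₀ hq (Or.inl rfl) hp ht hpt.1 hsole
      fun _ => hy₀t
  exact exists_shrink_of_slack_of_arc_to_spare hsc hg hC hP hy₀ hq hp ht hpt
    (hsc.arc_of_not_arc (ne_of_mem_erase ht) hy₀t) hO

theorem exists_shrink_of_slack_of_forall_not_soleOutNbr
    (hno : ∀ z ∉ X, ∀ t ∈ (Xᶜ).erase y₀, IsSoleOutNbr A Xᶜ z t → z = y₀)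
    (hy₀sole : ∀ t, ¬ IsSoleOutNbr A Xᶜ y₀ t) :
    ∃ X', IsOutColourClass A X' ∧ X'.card + 1 = X.card := by
  by_cases hβ : ∃ p ∈ (Xᶜ).erase y₀, ∃ t ∈ (Xᶜ).erase y₀, A p t ∧ ∃ x ∈ X, A y₀ x ∧ x ≠ ξ p
  · obtain ⟨p, hp, t, ht, hpt, x, hx, hy₀x, hxp⟩ := hβ
    obtain ⟨b, hb, hbx⟩ := hC.exists_ne hsc x
    refine exists_shrink_of_slack_exchange hsc hg hC hP hy₀ hq hb hp ht hpt (fun z hz hs => ?_)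
      fun hsub => ?_
    · obtain rfl := hno z hz t ht hs
      exact absurd hs (hy₀sole t)
    · rcases hsub x hx hy₀x with h | h
      · exact absurd h hxp
      · exact absurd h.symm hbx
  push Not at hβ
  obtain ⟨p, hp, t, ht, hpt⟩ := exists_arc_of_one_lt_card hsc (S := (Xᶜ).erase y₀)
    (by rw [card_erase_of_mem hy₀]; omega)
  obtain ⟨x₀, hx₀, hy₀x₀⟩ := (hg y₀).1
  have hx₀p := hβ p hp t ht hpt x₀ hx₀ hy₀x₀
  -- every arc inside `(Xᶜ).erase y₀` starts at `p`, as `y₀` sees only one vertex `ξ p` of `X`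
  have hsrc : ∀ d ∈ (Xᶜ).erase y₀, ∀ e ∈ (Xᶜ).erase y₀, A d e → d = p := fun d hd e he hde =>
    hP.injOn d hd p hp ((hβ d hd e he hde x₀ hx₀ hy₀x₀).symm.trans hx₀p)
  have htp : t ≠ p := (hsc.ne_of_arc hpt).symm
  have hty₀ : IsSoleOutNbr A Xᶜ t y₀ := by
    have hout : ∀ u ∈ Xᶜ, A t u → u = y₀ := fun u hu htu =>
      by_contra fun h => htp (hsrc t ht u (mem_erase.2 ⟨h, hu⟩) htu)
    obtain ⟨u, hu, htu⟩ := (hg t).2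
    exact ⟨hout u (mem_compl.2 hu) htu ▸ htu, hout⟩
  refine exists_shrink_of_slack_exchange_spare hsc hg hC hP hy₀ hq ht hty₀.1
    (fun z hz hs => hs.unique_left hsc (mem_compl.2 hz) (mem_of_mem_erase ht) hty₀)
    ⟨x₀, hx₀, hy₀x₀, hx₀p ▸ fun h => htp (hP.injOn p hp t ht h).symm,
      hx₀p ▸ hP.ne_of_isCyclicCore hC hp (Or.inl rfl)⟩ ?_
  refine hsc.arc_of_not_arc (ne_of_mem_of_not_mem hC.mem₃ (mem_compl.1 hy₀)) fun h => ?_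
  exact hP.ne_of_isCyclicCore hC hp (Or.inr (Or.inr rfl)) (hβ p hp t ht hpt s₃ hC.mem₃ h).symm

section SoleOutNbrSpare

variable {τ : V} (hno : ∀ z ∉ X, ∀ t ∈ (Xᶜ).erase y₀, IsSoleOutNbr A Xᶜ z t → z = y₀)
  (hτ : IsSoleOutNbr A Xᶜ y₀ τ) (hτY : τ ∈ (Xᶜ).erase y₀)
include hno hτ hτY

theorem exists_shrink_of_slack_of_arc_to_core {x : V} (hx : x = s₁ ∨ x = s₂ ∨ x = s₃)
    (hy₀x : A y₀ x) (hxτ : x ≠ ξ τ) : ∃ X', IsOutColourClass A X' ∧ X'.card + 1 = X.card := by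
  by_cases hin : ∃ p ∈ (Xᶜ).erase y₀, p ≠ τ ∧ A p τ
  · obtain ⟨p, hp, -, hpτ⟩ := hin
    refine exists_shrink_of_slack_exchange hsc hg hC hP hy₀ hq hx hp hτY hpτ (fun z hz hs => ?_)
      fun _ => hτ.1
    obtain rfl := hno z hz τ hτY hs
    exact Or.inr (Or.inr hy₀x)
  push Not at hin
  obtain ⟨c, hc, hcτ⟩ := exists_mem_ne (by rw [card_erase_of_mem hy₀]; omega) τ
  obtain ⟨b, hb, hbx⟩ := hC.exists_ne hsc x
  refine exists_shrink_of_slack_exchange hsc hg hC hP hy₀ hq hb hτY hc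
    (hsc.arc_of_not_arc (Ne.symm hcτ) (hin c hc hcτ)) (fun z hz hs => ?_) fun hsub => ?_
  · obtain rfl := hno z hz c hc hs
    exact absurd (hτ.2 c (mem_of_mem_erase hc) hs.1) hcτ
  · obtain ⟨a, d, hC'⟩ := hC.exists_rotation hx
    rcases hsub x hC'.mem₂ hy₀x with h | h
    · exact absurd h hxτ
    · exact absurd h.symm hbx

theorem exists_shrink_of_slack_of_arc_to_pinned {p : V} (hp : p ∈ (Xᶜ).erase y₀) (hpτ : p ≠ τ)
    (hy₀p : A y₀ (ξ p)) : ∃ X', IsOutColourClass A X' ∧ X'.card + 1 = X.card := by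
  by_cases hpτ' : A p τ
  · refine exists_shrink_of_slack_exchange hsc hg hC hP hy₀ hq (Or.inl rfl) hp hτY hpτ'
      (fun z hz hs => ?_) fun _ => hτ.1
    obtain rfl := hno z hz τ hτY hs
    exact Or.inr (Or.inl hy₀p)
  refine exists_shrink_of_slack_exchange hsc hg hC hP hy₀ hq (Or.inl rfl) hτY hp
    (hsc.arc_of_not_arc hpτ.symm hpτ') (fun z hz hs => ?_) fun hsub => ?_
  · obtain rfl := hno z hz p hp hs
    exact absurd (hτ.2 p (mem_of_mem_erase hp) hs.1) hpτ
  · rcases hsub (ξ p) (hP.mem p hp) hy₀p with h | h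
    · exact absurd (hP.injOn p hp τ hτY h) hpτ
    · exact absurd h (hP.ne_of_isCyclicCore hC hp (Or.inl rfl))

end SoleOutNbrSpare

theorem exists_shrink_of_slack_of_soleOutNbr_spare
    (hsurj : ∀ x ∈ X, x ≠ s₁ → x ≠ s₂ → x ≠ s₃ → ∃ y ∈ (Xᶜ).erase y₀, ξ y = x)
    (hno : ∀ z ∉ X, ∀ t ∈ (Xᶜ).erase y₀, IsSoleOutNbr A Xᶜ z t → z = y₀)
    {τ : V} (hτ : IsSoleOutNbr A Xᶜ y₀ τ) :
    ∃ X', IsOutColourClass A X' ∧ X'.card + 1 = X.card := by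
  have hτY : τ ∈ (Xᶜ).erase y₀ := by
    obtain ⟨u, hu, hy₀u⟩ := (hg y₀).2
    obtain rfl := hτ.2 u (mem_compl.2 hu) hy₀u
    exact mem_erase.2 ⟨(hsc.ne_of_arc hy₀u).symm, mem_compl.2 hu⟩
  by_cases hsplit : ∃ x ∈ X, A y₀ x ∧ x ≠ ξ τ
  · obtain ⟨x, hx, hy₀x, hxτ⟩ := hsplit
    by_cases hxS : x = s₁ ∨ x = s₂ ∨ x = s₃
    · exact exists_shrink_of_slack_of_arc_to_core hsc hg hC hP hy₀ hq hno hτ hτY hxS hy₀x hxτ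
    push Not at hxS
    obtain ⟨p, hp, rfl⟩ := hsurj x hx hxS.1 hxS.2.1 hxS.2.2
    exact exists_shrink_of_slack_of_arc_to_pinned hsc hg hC hP hy₀ hq hno hτ hτY hp
      (fun h => hxτ (h ▸ rfl)) hy₀x
  push Not at hsplit
  obtain ⟨c, hc, hcτ⟩ := exists_mem_ne (by rw [card_erase_of_mem hy₀]; omega) τ
  obtain ⟨x₀, hx₀, hy₀x₀⟩ := (hg y₀).1
  obtain rfl := hsplit x₀ hx₀ hy₀x₀
  refine exists_shrink_of_slack_exchange_core hsc hg hC hP hy₀ hq hc (fun z hz _ hs => ?_)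
    ⟨ξ τ, hx₀, hy₀x₀, hP.ne_of_isCyclicCore hC hτY (Or.inr (Or.inr rfl)),
      hP.ne_of_isCyclicCore hC hτY (Or.inr (Or.inl rfl))⟩
  obtain rfl := hno z hz c hc hs
  exact hcτ (hτ.2 c (mem_of_mem_erase hc) hs.1)

theorem exists_shrink_of_slack
    (hsurj : ∀ x ∈ X, x ≠ s₁ → x ≠ s₂ → x ≠ s₃ → ∃ y ∈ (Xᶜ).erase y₀, ξ y = x) :
    ∃ X', IsOutColourClass A X' ∧ X'.card + 1 = X.card := by
  by_cases h : ∃ p ∈ (Xᶜ).erase y₀, ∃ t ∈ (Xᶜ).erase y₀, IsSoleOutNbr A Xᶜ p t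
  · obtain ⟨p, hp, t, ht, hpt⟩ := h
    exact exists_shrink_of_slack_of_soleOutNbr hsc hg hC hP hy₀ hq hp ht hpt
  push Not at h
  have hno : ∀ z ∉ X, ∀ t ∈ (Xᶜ).erase y₀, IsSoleOutNbr A Xᶜ z t → z = y₀ :=
    fun z hz t ht hs => by_contra fun hzy => h z (mem_erase.2 ⟨hzy, mem_compl.2 hz⟩) t ht hs
  by_cases hτ : ∃ τ, IsSoleOutNbr A Xᶜ y₀ τ
  · obtain ⟨τ, hτ⟩ := hτ
    exact exists_shrink_of_slack_of_soleOutNbr_spare hsc hg hC hP hy₀ hq hsurj hno hτ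
  · push Not at hτ
    exact exists_shrink_of_slack_of_forall_not_soleOutNbr hsc hg hC hP hy₀ hq hno hτ

end Slack

section Shrink

variable [DecidableEq V] {X : Finset V}

theorem exists_outerPinning (hpin : ∀ x ∈ X, ∃ v, IsSoleOutNbr A X v x) :
    ∃ (Y : Finset V) (ξ : V → V), IsOuterPinning A X Y ξ ∧
      Y.card + (innerPinned A X).card = X.card ∧
      ∀ x ∈ X, x ∉ innerPinned A X → ∃ y ∈ Y, ξ y = x := by
  have hout : ∀ x ∈ X \ innerPinned A X, ∃ v ∉ X, IsSoleOutNbr A X v x := by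
    intro x hx
    obtain ⟨hxX, hxP⟩ := mem_sdiff.1 hx
    obtain ⟨v, hv⟩ := hpin x hxX
    exact ⟨v, fun hvX => hxP (mem_innerPinned_of_soleOutNbr hvX hxX hv), hv⟩
  choose! ψ hψX hψ using hout
  have hψinj : Set.InjOn ψ ↑(X \ innerPinned A X) := fun x hx x' hx' h =>
    (hψ x hx).unique_right (h ▸ hψ x' hx') (mem_sdiff.1 hx).1
  have hpre : ∀ y ∈ (X \ innerPinned A X).image ψ, ∃ x ∈ X \ innerPinned A X, ψ x = y :=
    fun y hy => mem_image.1 hy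
  choose! ξ hξ hψξ using hpre
  refine ⟨_, ξ, ⟨fun y hy => ?_, fun y hy => (mem_sdiff.1 (hξ y hy)).1, fun y hy => ?_,
    fun y hy y' hy' h => ?_, fun y hy => (mem_sdiff.1 (hξ y hy)).2⟩, ?_, fun x hx hxP => ?_⟩
  · exact hψξ y hy ▸ hψX _ (hξ y hy)
  · have h := hψ _ (hξ y hy)
    rwa [hψξ y hy] at h
  · rw [← hψξ y hy, ← hψξ y' hy', h]
  · rw [card_image_of_injOn hψinj, card_sdiff_add_card_eq_card innerPinned_subset]
  · have hx' : x ∈ X \ innerPinned A X := mem_sdiff.2 ⟨hx, hxP⟩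
    have hy : ψ x ∈ (X \ innerPinned A X).image ψ := mem_image_of_mem ψ hx'
    exact ⟨ψ x, hy, hψinj (hξ _ hy) hx' (hψξ _ hy)⟩

theorem exists_chain_of_card_innerPinned_eq_two (hsc : IsSemicomplete A)
    (h : (innerPinned A X).card = 2) :
    ∃ w ∈ X, ∃ x ∈ X, ∃ x' ∈ X, IsSoleOutNbr A X w x ∧ IsSoleOutNbr A X x x' ∧
      innerPinned A X = {x, x'} := by
  obtain ⟨x₁, x₂, h₁₂, hP⟩ := card_eq_two.1 h
  obtain ⟨hx₁, w₁, hw₁, hs₁⟩ := mem_innerPinned.1 (hP ▸ mem_insert_self x₁ {x₂})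
  obtain ⟨hx₂, w₂, hw₂, hs₂⟩ := mem_innerPinned.1 (hP ▸ mem_insert_of_mem (mem_singleton_self x₂))
  have hw : w₁ ≠ w₂ := fun h => h₁₂ (hs₁.unique_right (h ▸ hs₂) hx₁)
  rcases hs₁.eq_or_eq hsc hw₁ hw₂ hw hs₂ with rfl | rfl
  · exact ⟨w₁, hw₁, x₁, hx₁, x₂, hx₂, hs₁, hs₂, hP⟩
  · exact ⟨w₂, hw₂, x₂, hx₂, x₁, hx₁, hs₂, hs₁, hP.trans (pair_comm _ _)⟩

theorem exists_cyclicCore_of_card_innerPinned_eq_three (hsc : IsSemicomplete A)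
    (h : (innerPinned A X).card = 3) :
    ∃ s₁ s₂ s₃, IsCyclicCore A X s₁ s₂ s₃ ∧ innerPinned A X = {s₁, s₂, s₃} := by
  obtain ⟨x₁, x₂, x₃, h₁₂, h₁₃, h₂₃, hP⟩ := card_eq_three.1 h
  obtain ⟨hx₁, w₁, hw₁, hs₁⟩ := mem_innerPinned.1 (hP ▸ by simp : x₁ ∈ innerPinned A X)
  obtain ⟨hx₂, w₂, hw₂, hs₂⟩ := mem_innerPinned.1 (hP ▸ by simp : x₂ ∈ innerPinned A X)
  obtain ⟨hx₃, w₃, hw₃, hs₃⟩ := mem_innerPinned.1 (hP ▸ by simp : x₃ ∈ innerPinned A X)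
  have hne : ∀ {w w' x x'}, x ∈ X → IsSoleOutNbr A X w x → IsSoleOutNbr A X w' x' →
      x ≠ x' → w ≠ w' := fun hx hs hs' hxx' h => hxx' (hs.unique_right (h ▸ hs') hx)
  rcases soleOutNbr_cycle hsc hw₁ hw₂ hw₃ (hne hx₁ hs₁ hs₂ h₁₂) (hne hx₁ hs₁ hs₃ h₁₃)
    (hne hx₂ hs₂ hs₃ h₂₃) hs₁ hs₂ hs₃ with ⟨rfl, rfl, rfl⟩ | ⟨rfl, rfl, rfl⟩
  · exact ⟨_, _, _, ⟨hx₁, hx₂, hx₃, hs₂, hs₃, hs₁⟩, hP⟩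
  · exact ⟨_, _, _, ⟨hx₁, hx₃, hx₂, hs₃, hs₂, hs₁⟩, hP.trans (by rw [pair_comm])⟩

variable [Fintype V] {ξ : V → V}

theorem exists_shrink_of_card_innerPinned_eq_two (hsc : IsSemicomplete A)
    (hg : IsOutColourClass A X) (hP : IsOuterPinning A X Xᶜ ξ)
    (hsurj : ∀ x ∈ X, x ∉ innerPinned A X → ∃ y ∈ Xᶜ, ξ y = x)
    (h : (innerPinned A X).card = 2) (hq : 3 ≤ Xᶜ.card) :
    ∃ X', IsOutColourClass A X' ∧ X'.card + 1 = X.card := by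
  obtain ⟨w, hw, x, hx, x', hx', hwx, hxx', hPe⟩ := exists_chain_of_card_innerPinned_eq_two hsc h
  by_cases hwx' : w = x'
  · subst hwx'
    exact exists_shrink_of_closed_chain hsc hg hP hwx hxx' (by simp [hPe]) hx hw (by omega)
  · obtain ⟨g, hg', rfl⟩ := hsurj w hw (by simp [hPe, hsc.ne_of_arc hwx.1, hwx'])
    exact exists_shrink_of_path hsc hg hP hwx hxx' hx hx' hg' hq

theorem exists_shrink_of_cyclicCore (hsc : IsSemicomplete A) (hg : IsOutColourClass A X)
    {s₁ s₂ s₃ : V} (hC : IsCyclicCore A X s₁ s₂ s₃) {Y : Finset V} (hP : IsOuterPinning A X Y ξ)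
    (hsurj : ∀ x ∈ X, x ≠ s₁ → x ≠ s₂ → x ≠ s₃ → ∃ y ∈ Y, ξ y = x)
    (hYX : Y ⊆ Xᶜ) (hcard : Xᶜ.card ≤ Y.card + 1) (hY : 2 ≤ Y.card) :
    ∃ X', IsOutColourClass A X' ∧ X'.card + 1 = X.card := by
  by_cases hYe : Y = Xᶜ
  · subst hYe
    exact exists_shrink_of_closed_chain hsc hg hP hC.sole₃₁ hC.sole₁₂
      hC.rotate.rotate.mem_innerPinned₁ hC.mem₁ hC.mem₂ hY
  obtain ⟨y₀, hy₀⟩ : (Xᶜ \ Y).Nonempty := sdiff_nonempty.2 fun h => hYe (subset_antisymm hYX h)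
  obtain ⟨hy₀X, hy₀Y⟩ := mem_sdiff.1 hy₀
  have hYe' : Y = (Xᶜ).erase y₀ := eq_of_subset_of_card_le
    (fun y hy => mem_erase.2 ⟨fun h => hy₀Y (h ▸ hy), hYX hy⟩)
    (by rw [card_erase_of_mem hy₀X]; omega)
  subst hYe'
  have hq : 3 ≤ Xᶜ.card := by rw [card_erase_of_mem hy₀X] at hY; omega
  exact exists_shrink_of_slack hsc hg hC hP hy₀X hq hsurj

theorem exists_shrink (hsc : IsSemicomplete A) (hg : IsOutColourClass A X)
    (himb : Xᶜ.card + 2 ≤ X.card) (hn : 7 ≤ Fintype.card V) :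
    ∃ X', IsOutColourClass A X' ∧ X'.card + 1 = X.card := by
  by_cases hfree : ∃ x ∈ X, ¬ ∃ v, IsSoleOutNbr A X v x
  · obtain ⟨x, hx, hfree⟩ := hfree
    exact ⟨X.erase x, hg.erase hfree, card_erase_add_one hx⟩
  push Not at hfree
  obtain ⟨Y, ξ, hP, hcard, hsurj⟩ := exists_outerPinning hfree
  have hYX : Y ⊆ Xᶜ := fun y hy => mem_compl.2 (hP.notMem y hy)
  have hYc := card_le_card hYX
  have hV := card_add_card_compl X
  have h3 := card_innerPinned_le_three hsc X
  -- `|X| - |innerPinned A X| = |Y| ≤ |Xᶜ| ≤ |X| - 2`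
  rcases (by omega : (innerPinned A X).card = 2 ∨ (innerPinned A X).card = 3) with h | h
  · obtain rfl : Y = Xᶜ := eq_of_subset_of_card_le hYX (by omega)
    exact exists_shrink_of_card_innerPinned_eq_two hsc hg hP hsurj h (by omega)
  · obtain ⟨s₁, s₂, s₃, hC, hPe⟩ := exists_cyclicCore_of_card_innerPinned_eq_three hsc h
    exact exists_shrink_of_cyclicCore hsc hg hC hP
      (fun x hx h₁ h₂ h₃ => hsurj x hx (by simp [hPe, h₁, h₂, h₃])) hYX (by omega) (by omega)

theorem exists_balanced (hsc : IsSemicomplete A) (hn : 7 ≤ Fintype.card V)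
    (hg : IsOutColourClass A X) :
    ∃ Z, IsOutColourClass A Z ∧ Zᶜ.card ≤ Z.card ∧ Z.card ≤ Zᶜ.card + 1 := by
  wlog hX : Xᶜ.card ≤ X.card generalizing X
  · exact this hg.compl (by rw [compl_compl]; omega)
  induction hk : X.card using Nat.strong_induction_on generalizing X with
  | _ k ih =>
    by_cases himb : Xᶜ.card + 2 ≤ X.card
    · obtain ⟨X', hg', hX'⟩ := exists_shrink hsc hg himb hn
      have := card_add_card_compl X
      have := card_add_card_compl X'
      exact ih X'.card (by omega) hg' (by omega) rfl
    · exact ⟨X, hg, hX, by omega⟩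

end Shrink

section Colouring

variable [Fintype V]

theorem isOutColourClass_of_isOutColouring {γ : V → Fin 2} (hγ : IsOutColouring A γ) :
    IsOutColourClass A (univ.filter fun v => γ v = 0) := by
  intro v
  obtain ⟨u, w, hvu, hvw, huw⟩ := hγ v
  simp only [mem_filter, mem_univ, true_and]
  have h01 : ∀ i : Fin 2, i = 0 ∨ i = 1 := by decide
  rcases h01 (γ u) with hu | hu <;> rcases h01 (γ w) with hw | hw
  · exact absurd (hu.trans hw.symm) huw
  · exact ⟨⟨u, hu, hvu⟩, w, by simp [hw], hvw⟩
  · exact ⟨⟨w, hw, hvw⟩, u, by simp [hu], hvu⟩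
  · exact absurd (hu.trans hw.symm) huw

theorem exists_balanced_isOutColouring [DecidableEq V] {Z : Finset V} (hZ : IsOutColourClass A Z)
    (h₁ : Zᶜ.card ≤ Z.card) (h₂ : Z.card ≤ Zᶜ.card + 1) :
    ∃ γ : V → Fin 2, IsOutColouring A γ ∧
      |((γ ⁻¹' {0} : Set V).ncard : ℤ) - ((γ ⁻¹' {1} : Set V).ncard : ℤ)| ≤ 1 := by
  refine ⟨fun v => if v ∈ Z then 0 else 1, fun v => ?_, ?_⟩
  · obtain ⟨⟨u, hu, hvu⟩, w, hw, hvw⟩ := hZ v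
    exact ⟨u, w, hvu, hvw, by simp [hu, hw]⟩
  · have e₀ : ((fun v => if v ∈ Z then (0 : Fin 2) else 1) ⁻¹' {0}) = ↑Z := by
      ext v; by_cases hv : v ∈ Z <;> simp [hv]
    have e₁ : ((fun v => if v ∈ Z then (0 : Fin 2) else 1) ⁻¹' {1}) = ↑Zᶜ := by
      ext v; by_cases hv : v ∈ Z <;> simp [hv]
    rw [e₀, e₁, Set.ncard_coe_finset, Set.ncard_coe_finset, abs_le]
    omega

end Colouring

end BalancedOutColouring

/-- Every semicomplete digraph on at least 7 vertices admits a 2-out-colouring if and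
only if it admits a balanced 2-out-colouring (the two colour classes have sizes
differing by at most one). -/
theorem stmt9 {V : Type*} [Fintype V] (A : V → V → Prop) (hT : IsSemicomplete A)
    (hn : 7 ≤ Fintype.card V) :
    (∃ γ : V → Fin 2, IsOutColouring A γ) ↔
    (∃ γ : V → Fin 2, IsOutColouring A γ ∧
      |((γ ⁻¹' {0} : Set V).ncard : ℤ) - ((γ ⁻¹' {1} : Set V).ncard : ℤ)| ≤ 1) := by
  classical
  refine ⟨fun ⟨γ, hγ⟩ => ?_, fun ⟨γ, hγ, _⟩ => ⟨γ, hγ⟩⟩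
  obtain ⟨Z, hZ, h₁, h₂⟩ := BalancedOutColouring.exists_balanced hT hn
    (BalancedOutColouring.isOutColourClass_of_isOutColouring hγ)
  exact BalancedOutColouring.exists_balanced_isOutColouring hZ h₁ h₂
end

section
/- Let q be a prime congruent to 3 modulo 4 and let P_q be the quadratic residue (Paley) tournament on the integers modulo q. Then for every function f from the vertices of P_q to {−1,1} there is a vertex v such that |Σ_{u ∈ N+(v)} f(u)| > (1/2)·√q. -/
/-!
Write `χ` for the quadratic character and `χ * f` for `v ↦ ∑ u, χ (v - u) f u`. Since
`χ (v - u) = 1` exactly on the out-neighbours of `v` and `χ 0 = 0`, twice the out-neighbour sum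
at `v` is `(χ * f) v + ∑ f - f v`. The correlations `∑ v, χ (v - u) χ (v - w) = q [u = w] - 1`
(a Jacobi sum) give `‖χ * f‖² = q ‖f‖² - (∑ f)²`; moreover `χ * f` is orthogonal to `1`, and,
because `χ (-1) = -1` when `q ≡ 3 (mod 4)`, also to `f`. Summing the squares of the
out-neighbour sums over `v` therefore gives `((q + 1) ‖f‖² + (q - 3) (∑ f)²) / 4`, which for
`f = ±1` exceeds `q · q / 4`, so some square exceeds `q / 4`.
-/

/-- The quadratic residue (Paley) tournament `P_q` on the integers modulo `q`:
there is an arc from `i` to `j` iff `i - j` is a non-zero quadratic residue mod `q`. -/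
def PaleyAdj (q : ℕ) : ZMod q → ZMod q → Prop :=
  fun i j => i ≠ j ∧ IsSquare (i - j)

open Finset

lemma Fintype.sum_comp_sub_right {G M : Type*} [AddGroup G] [Fintype G] [AddCommMonoid M]
    (f : G → M) (a : G) : ∑ x, f (x - a) = ∑ x, f x :=
  (Equiv.subRight a).sum_comp f

section FiniteField

variable {F : Type*} [Field F] [Fintype F] [DecidableEq F]

lemma quadraticChar_sum_mul_sub_mul_sub_of_ne (hF : ringChar F ≠ 2) {u w : F} (huw : u ≠ w) :
    ∑ v, quadraticChar F (v - u) * quadraticChar F (v - w) = -1 := by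
  set χ := quadraticChar F
  have ha : w - u ≠ 0 := sub_ne_zero.mpr huw.symm
  -- substituting `v = (w - u) x + u` turns the sum into `χ (-1)` times the Jacobi sum `J(χ, χ)`
  have hJ : ∑ x, χ x * χ (1 - x) = -χ (-1) := by
    have := jacobiSum_nontrivial_inv (quadraticChar_ne_one hF)
    rwa [(quadraticChar_isQuadratic F).inv] at this
  have hterm : ∀ x, χ ((w - u) * x + u - u) * χ ((w - u) * x + u - w) =
      χ (-1) * (χ x * χ (1 - x)) := by
    intro x
    rw [show (w - u) * x + u - u = (w - u) * x by ring,
      show (w - u) * x + u - w = -1 * (w - u) * (1 - x) by ring]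
    simp only [map_mul]
    linear_combination (χ (-1) * χ x * χ (1 - x)) * quadraticChar_sq_one ha
  calc ∑ v, χ (v - u) * χ (v - w)
      = ∑ x, χ ((w - u) * x + u - u) * χ ((w - u) * x + u - w) :=
        (Fintype.sum_equiv ((Equiv.mulLeft₀ _ ha).trans (Equiv.addRight u)) _ _
          fun _ => rfl).symm
    _ = -χ (-1) ^ 2 := by simp only [hterm, ← mul_sum, hJ]; ring
    _ = -1 := by rw [quadraticChar_sq_one (neg_ne_zero.mpr one_ne_zero)]

lemma quadraticChar_sum_sq_sub (u : F) :
    ∑ v, quadraticChar F (v - u) ^ 2 = Fintype.card F - 1 := by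
  rw [Fintype.sum_comp_sub_right (fun x => quadraticChar F x ^ 2),
    ← sum_erase_add _ _ (mem_univ 0),
    sum_congr rfl fun x hx => quadraticChar_sq_one (ne_of_mem_erase hx)]
  simp [Nat.cast_sub Fintype.card_pos]

lemma quadraticChar_sum_mul_sub_mul_sub (hF : ringChar F ≠ 2) (u w : F) :
    ∑ v, quadraticChar F (v - u) * quadraticChar F (v - w) =
      if u = w then (Fintype.card F : ℤ) - 1 else -1 := by
  split_ifs with huw
  · simp only [huw, ← sq, quadraticChar_sum_sq_sub]
  · exact quadraticChar_sum_mul_sub_mul_sub_of_ne hF huw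

noncomputable def quadraticCharConv (f : F → ℝ) (v : F) : ℝ :=
  ∑ u, (quadraticChar F (v - u) : ℝ) * f u

lemma sum_quadraticCharConv (hF : ringChar F ≠ 2) (f : F → ℝ) :
    ∑ v, quadraticCharConv f v = 0 := by
  have hrow : ∀ u : F, ∑ v, (quadraticChar F (v - u) : ℝ) = 0 := fun u => by
    rw [Fintype.sum_comp_sub_right (fun x => (quadraticChar F x : ℝ))]
    exact_mod_cast quadraticChar_sum_zero hF
  simp only [quadraticCharConv]
  rw [sum_comm]
  simp only [← sum_mul, hrow, zero_mul, sum_const_zero]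

lemma quadraticChar_neg (hχ : quadraticChar F (-1) = -1) (x : F) :
    quadraticChar F (-x) = -quadraticChar F x := by
  rw [neg_eq_neg_one_mul x, map_mul, hχ, neg_one_mul]

lemma sum_quadraticCharConv_mul_self (hχ : quadraticChar F (-1) = -1) (f : F → ℝ) :
    ∑ v, quadraticCharConv f v * f v = 0 := by
  set T := ∑ v, quadraticCharConv f v * f v
  have hT : T = -T := calc
    T = ∑ v, ∑ u, (quadraticChar F (v - u) : ℝ) * f u * f v := by
        simp only [T, quadraticCharConv, sum_mul]
    _ = ∑ u, ∑ v, -((quadraticChar F (u - v) : ℝ) * f v * f u) := by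
        rw [sum_comm]
        refine sum_congr rfl fun u _ => sum_congr rfl fun v _ => ?_
        rw [← neg_sub, quadraticChar_neg hχ]
        push_cast; ring
    _ = -T := by simp only [T, quadraticCharConv, sum_neg_distrib, sum_mul]
  linarith

lemma sum_quadraticCharConv_sq (hF : ringChar F ≠ 2) (f : F → ℝ) :
    ∑ v, quadraticCharConv f v ^ 2 = Fintype.card F * ∑ u, f u ^ 2 - (∑ u, f u) ^ 2 := by
  have hcorr : ∀ u w : F, ∑ v, (quadraticChar F (v - u) : ℝ) * quadraticChar F (v - w) =
      if u = w then (Fintype.card F : ℝ) - 1 else -1 := fun u w => by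
    exact_mod_cast quadraticChar_sum_mul_sub_mul_sub hF u w
  calc ∑ v, quadraticCharConv f v ^ 2
      = ∑ u, ∑ w, f u * f w *
          ∑ v, (quadraticChar F (v - u) : ℝ) * quadraticChar F (v - w) := by
        simp only [quadraticCharConv, sq, sum_mul_sum]
        simp only [mul_sum]
        rw [sum_comm]
        refine sum_congr rfl fun u _ => ?_
        rw [sum_comm]
        exact sum_congr rfl fun w _ => sum_congr rfl fun v _ => by ring
    _ = ∑ u, ∑ w, ((if u = w then Fintype.card F * f u ^ 2 else 0) - f u * f w) := by
        refine sum_congr rfl fun u _ => sum_congr rfl fun w _ => ?_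
        rw [hcorr]
        split_ifs with h
        · subst h; ring
        · ring
    _ = Fintype.card F * ∑ u, f u ^ 2 - (∑ u, f u) ^ 2 := by
        simp only [sum_sub_distrib, sum_ite_eq, mem_univ, if_true, ← mul_sum, ← sum_mul, sq]

lemma two_mul_indicator_isSquare_sub (f : F → ℝ) (v u : F) :
    2 * Set.indicator {u | v ≠ u ∧ IsSquare (v - u)} f u =
      ((quadraticChar F (v - u) : ℝ) + 1) * f u - if u = v then f u else 0 := by
  by_cases huv : u = v
  · subst huv
    simp
  have hvu : v - u ≠ 0 := sub_ne_zero.mpr (Ne.symm huv)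
  rw [if_neg huv]
  by_cases hs : IsSquare (v - u)
  · rw [Set.indicator_of_mem (show u ∈ {u | v ≠ u ∧ IsSquare (v - u)} from ⟨Ne.symm huv, hs⟩),
      (quadraticChar_one_iff_isSquare hvu).mpr hs]
    push_cast; ring
  · rw [Set.indicator_of_notMem fun h => hs h.2, quadraticChar_neg_one_iff_not_isSquare.mpr hs]
    push_cast; ring

lemma two_mul_sum_indicator_isSquare_sub (f : F → ℝ) (v : F) :
    2 * ∑ u, Set.indicator {u | v ≠ u ∧ IsSquare (v - u)} f u =
      quadraticCharConv f v + ∑ u, f u - f v := by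
  simp only [mul_sum, two_mul_indicator_isSquare_sub, sum_sub_distrib, add_mul, sum_add_distrib,
    one_mul, sum_ite_eq', mem_univ, if_true, quadraticCharConv]

lemma sum_sq_two_mul_sum_indicator_isSquare_sub (h4 : Fintype.card F % 4 = 3) (f : F → ℝ) :
    ∑ v, (2 * ∑ u, Set.indicator {u | v ≠ u ∧ IsSquare (v - u)} f u) ^ 2 =
      (Fintype.card F + 1) * ∑ u, f u ^ 2 + (Fintype.card F - 3) * (∑ u, f u) ^ 2 := by
  have hF : ringChar F ≠ 2 := by
    rw [Ne, FiniteField.even_card_iff_char_two]; omega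
  have hχ : quadraticChar F (-1) = -1 := by
    rw [quadraticChar_neg_one hF]; exact ZMod.χ₄_nat_three_mod_four h4
  have hexpand : ∀ v, (2 * ∑ u, Set.indicator {u | v ≠ u ∧ IsSquare (v - u)} f u) ^ 2 =
      quadraticCharConv f v ^ 2 + 2 * (∑ u, f u) * quadraticCharConv f v
        - 2 * (quadraticCharConv f v * f v) + f v ^ 2 - 2 * (∑ u, f u) * f v
        + (∑ u, f u) ^ 2 := fun v => by
    rw [two_mul_sum_indicator_isSquare_sub]; ring
  simp only [hexpand, sum_add_distrib, sum_sub_distrib, ← mul_sum, sum_quadraticCharConv_sq hF,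
    sum_quadraticCharConv hF, sum_quadraticCharConv_mul_self hχ, sum_const, card_univ,
    nsmul_eq_mul]
  ring

theorem exists_lt_abs_sum_indicator_isSquare_sub (h4 : Fintype.card F % 4 = 3) (f : F → ℝ)
    (hf : ∀ v, f v = 1 ∨ f v = -1) :
    ∃ v, (1 / 2 : ℝ) * √(Fintype.card F) <
      |∑ u, Set.indicator {u | v ≠ u ∧ IsSquare (v - u)} f u| := by
  have hq : (3 : ℝ) ≤ Fintype.card F := by exact_mod_cast (show 3 ≤ Fintype.card F by omega)
  have hf2 : ∀ u, f u ^ 2 = 1 := fun u => by rcases hf u with h | h <;> simp [h]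
  have hlt : ∑ _v : F, (Fintype.card F : ℝ) <
      ∑ v, (2 * ∑ u, Set.indicator {u | v ≠ u ∧ IsSquare (v - u)} f u) ^ 2 := by
    rw [sum_sq_two_mul_sum_indicator_isSquare_sub h4, sum_const, card_univ, nsmul_eq_mul]
    simp only [hf2, sum_const, card_univ, nsmul_eq_mul, mul_one]
    nlinarith [sq_nonneg (∑ u, f u)]
  obtain ⟨v, -, hv⟩ := exists_lt_of_sum_lt hlt
  refine ⟨v, ?_⟩
  have := Real.sqrt_lt_sqrt (by positivity) hv
  rw [Real.sqrt_sq_eq_abs, abs_mul, abs_two] at this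
  linarith

end FiniteField

/-- For a prime `q ≡ 3 (mod 4)` and any function `f` from the vertices of the Paley
tournament `P_q` to `{-1, 1}`, there is a vertex `v` with
`|∑_{u ∈ N⁺(v)} f u| > (1/2)·√q`. -/
theorem stmt14 (q : ℕ) [NeZero q] (hq : q.Prime) (h4 : q % 4 = 3)
    (f : ZMod q → ℝ) (hf : ∀ v : ZMod q, f v = 1 ∨ f v = -1) :
    ∃ v : ZMod q,
      (1 / 2 : ℝ) * Real.sqrt q <
        |∑ u : ZMod q, Set.indicator {u | PaleyAdj q v u} f u| := by
  have : Fact q.Prime := ⟨hq⟩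
  rw [← ZMod.card q] at h4
  simpa only [ZMod.card, PaleyAdj] using exists_lt_abs_sum_indicator_isSquare_sub h4 f hf
end
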